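/- arXiv:math/0512563 — 4 statements merged into one kernel-verified Lean document; each statement's English description precedes it below -/
import Mathlib

section
/- For all a, b ∈ ℕ one has the identity E^{(a)} F^{(b)} = Σ_{t=0}^{min(a,b)} F^{(b−t)} · [K,K̃; 2t−a−b; t] · E^{(a−t)} in D_q. -/
noncomputable section

/-- Generators of the quantum double `D_q`. -/
inductive DGen : Type
  | E | F | K | Kinv | Kt | Ktinv
  deriving DecidableEq

/-- The defining relations of `D_q`. -/
inductive DRel (k : Type) [Field k] (q : k) :
    FreeAlgebra k DGen → FreeAlgebra k DGen → Prop
  | KE : DRel k q (FreeAlgebra.ι k DGen.K * FreeAlgebra.ι k DGen.E)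
      ((q ^ 2) • (FreeAlgebra.ι k DGen.E * FreeAlgebra.ι k DGen.K))
  | KF : DRel k q (FreeAlgebra.ι k DGen.K * FreeAlgebra.ι k DGen.F)
      (((q ^ 2)⁻¹) • (FreeAlgebra.ι k DGen.F * FreeAlgebra.ι k DGen.K))
  | KtE : DRel k q (FreeAlgebra.ι k DGen.Kt * FreeAlgebra.ι k DGen.E)
      ((q ^ 2) • (FreeAlgebra.ι k DGen.E * FreeAlgebra.ι k DGen.Kt))
  | KtF : DRel k q (FreeAlgebra.ι k DGen.Kt * FreeAlgebra.ι k DGen.F)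
      (((q ^ 2)⁻¹) • (FreeAlgebra.ι k DGen.F * FreeAlgebra.ι k DGen.Kt))
  | KKinv : DRel k q (FreeAlgebra.ι k DGen.K * FreeAlgebra.ι k DGen.Kinv) 1
  | KinvK : DRel k q (FreeAlgebra.ι k DGen.Kinv * FreeAlgebra.ι k DGen.K) 1
  | KtKtinv : DRel k q (FreeAlgebra.ι k DGen.Kt * FreeAlgebra.ι k DGen.Ktinv) 1
  | KtinvKt : DRel k q (FreeAlgebra.ι k DGen.Ktinv * FreeAlgebra.ι k DGen.Kt) 1
  | KKt : DRel k q (FreeAlgebra.ι k DGen.K * FreeAlgebra.ι k DGen.Kt)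
      (FreeAlgebra.ι k DGen.Kt * FreeAlgebra.ι k DGen.K)
  | EF : DRel k q (FreeAlgebra.ι k DGen.E * FreeAlgebra.ι k DGen.F)
      (FreeAlgebra.ι k DGen.F * FreeAlgebra.ι k DGen.E +
        ((q - q⁻¹)⁻¹) • (FreeAlgebra.ι k DGen.K - FreeAlgebra.ι k DGen.Ktinv))

/-- The quantum double `D_q` of `U_q(sl2)^{≤0}`, presented by generators and relations. -/
abbrev Dq (k : Type) [Field k] (q : k) := RingQuot (DRel k q)

def DE (k : Type) [Field k] (q : k) : Dq k q :=
  RingQuot.mkAlgHom k (DRel k q) (FreeAlgebra.ι k DGen.E)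
def DF (k : Type) [Field k] (q : k) : Dq k q :=
  RingQuot.mkAlgHom k (DRel k q) (FreeAlgebra.ι k DGen.F)
def DK (k : Type) [Field k] (q : k) : Dq k q :=
  RingQuot.mkAlgHom k (DRel k q) (FreeAlgebra.ι k DGen.K)
def DKinv (k : Type) [Field k] (q : k) : Dq k q :=
  RingQuot.mkAlgHom k (DRel k q) (FreeAlgebra.ι k DGen.Kinv)
def DKt (k : Type) [Field k] (q : k) : Dq k q :=
  RingQuot.mkAlgHom k (DRel k q) (FreeAlgebra.ι k DGen.Kt)
def DKtinv (k : Type) [Field k] (q : k) : Dq k q :=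
  RingQuot.mkAlgHom k (DRel k q) (FreeAlgebra.ι k DGen.Ktinv)

/-- The quantum integer `[n]_q = (qⁿ - q⁻ⁿ)/(q - q⁻¹)`. -/
def qint (k : Type) [Field k] (q : k) (n : ℕ) : k := (q ^ n - q⁻¹ ^ n) / (q - q⁻¹)

/-- The quantum factorial `[n]_q!`. -/
def qfact (k : Type) [Field k] (q : k) : ℕ → k
  | 0 => 1
  | n + 1 => qfact k q n * qint k q (n + 1)

/-- The Gaussian binomial coefficient `[m choose n]_q`. -/
def qbinom (k : Type) [Field k] (q : k) (m n : ℕ) : k :=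
  qfact k q m / (qfact k q n * qfact k q (m - n))

/-- The element `[K,K̃;c;t] = ∏_{s=1}^t (K q^{c-s+1} - K̃⁻¹ q^{-c+s-1})/(q^s - q^{-s})` of `D_q`. -/
def KKtc (k : Type) [Field k] (q : k) (c : ℤ) : ℕ → Dq k q
  | 0 => 1
  | t + 1 =>
      KKtc k q c t *
        ((q ^ ((t : ℤ) + 1) - q ^ (-((t : ℤ) + 1)))⁻¹ •
          (q ^ (c - (t : ℤ)) • DK k q - q ^ ((t : ℤ) - c) • DKtinv k q))


section Rels
variable {k : Type} [Field k] {q : k}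

lemma drel {x y : FreeAlgebra k DGen} (h : DRel k q x y) :
    RingQuot.mkAlgHom k (DRel k q) x = RingQuot.mkAlgHom k (DRel k q) y :=
  RingQuot.mkAlgHom_rel k h

lemma rKE : DK k q * DE k q = (q ^ 2) • (DE k q * DK k q) := by
  have := drel (q := q) DRel.KE
  simpa [map_mul, map_smul, DK, DE] using this

lemma rKF : DK k q * DF k q = ((q ^ 2)⁻¹) • (DF k q * DK k q) := by
  have := drel (q := q) DRel.KF
  simpa [map_mul, map_smul, DK, DF] using this

lemma rKtE : DKt k q * DE k q = (q ^ 2) • (DE k q * DKt k q) := by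
  have := drel (q := q) DRel.KtE
  simpa [map_mul, map_smul, DKt, DE] using this

lemma rKtF : DKt k q * DF k q = ((q ^ 2)⁻¹) • (DF k q * DKt k q) := by
  have := drel (q := q) DRel.KtF
  simpa [map_mul, map_smul, DKt, DF] using this

lemma rKtKtinv : DKt k q * DKtinv k q = 1 := by
  have := drel (q := q) DRel.KtKtinv
  simpa [map_mul, map_one, DKt, DKtinv] using this

lemma rKtinvKt : DKtinv k q * DKt k q = 1 := by
  have := drel (q := q) DRel.KtinvKt
  simpa [map_mul, map_one, DKt, DKtinv] using this

lemma rKKt : DK k q * DKt k q = DKt k q * DK k q := by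
  have := drel (q := q) DRel.KKt
  simpa [map_mul, DK, DKt] using this

lemma rEF : DE k q * DF k q = DF k q * DE k q + ((q - q⁻¹)⁻¹) • (DK k q - DKtinv k q) := by
  have := drel (q := q) DRel.EF
  simpa [map_mul, map_add, map_smul, map_sub, DE, DF, DK, DKtinv] using this

end Rels
section Derived
variable {k : Type} [Field k] {q : k}

lemma rEK (hq0 : q ≠ 0) : DE k q * DK k q = ((q ^ 2)⁻¹) • (DK k q * DE k q) := by
  rw [rKE, smul_smul, inv_mul_cancel₀ (pow_ne_zero 2 hq0), one_smul]

lemma rEKtinv : DE k q * DKtinv k q = (q ^ 2) • (DKtinv k q * DE k q) := by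
  calc DE k q * DKtinv k q = DKtinv k q * (DKt k q * DE k q) * DKtinv k q := by
        rw [← mul_assoc, rKtinvKt, one_mul]
    _ = (q ^ 2) • (DKtinv k q * DE k q * (DKt k q * DKtinv k q)) := by
        rw [rKtE, mul_smul_comm, smul_mul_assoc]
        simp only [mul_assoc]
    _ = (q ^ 2) • (DKtinv k q * DE k q) := by rw [rKtKtinv, mul_one]

lemma rFKt (hq0 : q ≠ 0) : DF k q * DKt k q = (q ^ 2) • (DKt k q * DF k q) := by
  rw [rKtF, smul_smul, mul_inv_cancel₀ (pow_ne_zero 2 hq0), one_smul]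

lemma rKtinvF (hq0 : q ≠ 0) : DKtinv k q * DF k q = (q ^ 2) • (DF k q * DKtinv k q) := by
  calc DKtinv k q * DF k q = DKtinv k q * (DF k q * DKt k q) * DKtinv k q := by
        rw [mul_assoc, mul_assoc, rKtKtinv, mul_one]
    _ = (q ^ 2) • ((DKtinv k q * DKt k q) * (DF k q * DKtinv k q)) := by
        rw [rFKt hq0, mul_smul_comm, smul_mul_assoc]
        congr 1
        simp only [mul_assoc]
    _ = (q ^ 2) • (DF k q * DKtinv k q) := by rw [rKtinvKt, one_mul]

lemma rKKtinv : DK k q * DKtinv k q = DKtinv k q * DK k q := by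
  calc DK k q * DKtinv k q = DKtinv k q * (DKt k q * DK k q) * DKtinv k q := by
        rw [← mul_assoc, rKtinvKt, one_mul]
    _ = DKtinv k q * DK k q * (DKt k q * DKtinv k q) := by
        rw [← rKKt]; simp only [mul_assoc]
    _ = DKtinv k q * DK k q := by rw [rKtKtinv, mul_one]

end Derived
section Scalars
variable {k : Type} [Field k] {q : k}

lemma hqd (hq0 : q ≠ 0) (hq : ∀ n : ℕ, 0 < n → q ^ n ≠ 1) : q - q⁻¹ ≠ 0 := by
  intro h
  apply hq 2 (by norm_num)
  have h2 : q = q⁻¹ := by linear_combination h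
  have : q * q = 1 := by
    nth_rewrite 2 [h2]
    exact mul_inv_cancel₀ hq0
  rw [sq, this]

lemma zpow_sub_ne (hq0 : q ≠ 0) (hq : ∀ n : ℕ, 0 < n → q ^ n ≠ 1) (n : ℕ) (hn : 0 < n) :
    q ^ (n : ℤ) - q ^ (-(n : ℤ)) ≠ 0 := by
  intro h
  apply hq (2 * n) (by omega)
  have h2 : q ^ (n : ℤ) = q ^ (-(n : ℤ)) := by linear_combination h
  have h3 : q ^ (n : ℤ) * q ^ (n : ℤ) = q ^ (-(n : ℤ)) * q ^ (n : ℤ) := by rw [h2]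
  rw [← zpow_add₀ hq0, ← zpow_add₀ hq0] at h3
  simp only [neg_add_cancel, zpow_zero] at h3
  have : ((2 * n : ℕ) : ℤ) = (n : ℤ) + n := by push_cast; ring
  rw [← zpow_natCast q (2 * n), this, h3]

lemma qint_eq (hq0 : q ≠ 0) (n : ℕ) :
    qint k q n = (q ^ (n : ℤ) - q ^ (-(n : ℤ))) / (q - q⁻¹) := by
  rw [qint, zpow_natCast, zpow_neg, zpow_natCast, inv_pow]

lemma qint_ne (hq0 : q ≠ 0) (hq : ∀ n : ℕ, 0 < n → q ^ n ≠ 1) (n : ℕ) (hn : 0 < n) :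
    qint k q n ≠ 0 := by
  rw [qint_eq hq0]
  exact div_ne_zero (zpow_sub_ne hq0 hq n hn) (hqd hq0 hq)

lemma qfact_ne (hq0 : q ≠ 0) (hq : ∀ n : ℕ, 0 < n → q ^ n ≠ 1) (n : ℕ) :
    qfact k q n ≠ 0 := by
  induction n with
  | zero => simp [qfact]
  | succ m ih => exact mul_ne_zero ih (qint_ne hq0 hq (m + 1) (by omega))

lemma qfact_succ_inv (hq0 : q ≠ 0) (hq : ∀ n : ℕ, 0 < n → q ^ n ≠ 1) (n : ℕ) :
    (qfact k q (n + 1))⁻¹ * qint k q (n + 1) = (qfact k q n)⁻¹ := by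
  rw [show qfact k q (n+1) = qfact k q n * qint k q (n+1) from rfl, mul_inv]
  rw [mul_assoc, inv_mul_cancel₀ (qint_ne hq0 hq (n+1) (by omega)), mul_one]

end Scalars
/-- linear combination `u•K - v•K̃⁻¹`. -/
def lin (k : Type) [Field k] (q : k) (u v : k) : Dq k q :=
  u • DK k q - v • DKtinv k q

section Lin
variable {k : Type} [Field k] {q : k}

lemma KKtc_succ (c : ℤ) (t : ℕ) :
    KKtc k q c (t + 1) = KKtc k q c t *
      ((q ^ ((t : ℤ) + 1) - q ^ (-((t : ℤ) + 1)))⁻¹ •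
        lin k q (q ^ (c - (t : ℤ))) (q ^ ((t : ℤ) - c))) := rfl

lemma lin_comm (u v u' v' : k) :
    lin k q u v * lin k q u' v' = lin k q u' v' * lin k q u v := by
  simp only [lin, sub_mul, mul_sub, smul_mul_assoc, mul_smul_comm]
  rw [rKKtinv]
  module

lemma smul_lin_comm (r r' u v u' v' : k) :
    (r • lin k q u v) * (r' • lin k q u' v') = (r' • lin k q u' v') * (r • lin k q u v) := by
  rw [smul_mul_smul_comm, smul_mul_smul_comm, lin_comm, mul_comm r]

lemma lin_mul_KKtc (u v : k) (c : ℤ) (t : ℕ) :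
    lin k q u v * KKtc k q c t = KKtc k q c t * lin k q u v := by
  induction t with
  | zero => simp [KKtc]
  | succ s ih =>
      rw [KKtc_succ, ← mul_assoc, ih, mul_assoc, mul_assoc, mul_smul_comm, smul_mul_assoc,
        lin_comm]

lemma E_mul_lin (hq0 : q ≠ 0) (u v : k) :
    DE k q * lin k q u v = lin k q ((q ^ 2)⁻¹ * u) (q ^ 2 * v) * DE k q := by
  simp only [lin, mul_sub, sub_mul, mul_smul_comm, smul_mul_assoc]
  rw [rEK hq0, rEKtinv]
  module

lemma lin_mul_F (hq0 : q ≠ 0) (u v : k) :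
    lin k q u v * DF k q = DF k q * lin k q ((q ^ 2)⁻¹ * u) (q ^ 2 * v) := by
  simp only [lin, mul_sub, sub_mul, mul_smul_comm, smul_mul_assoc]
  rw [rKF, rKtinvF hq0]
  module

lemma E_mul_KKtc (hq0 : q ≠ 0) (c : ℤ) (t : ℕ) :
    DE k q * KKtc k q c t = KKtc k q (c - 2) t * DE k q := by
  induction t with
  | zero => simp [KKtc]
  | succ s ih =>
      rw [KKtc_succ, ← mul_assoc, ih, mul_assoc, mul_smul_comm, E_mul_lin hq0,
        KKtc_succ (c - 2) s]
      have h1 : (q ^ 2)⁻¹ * q ^ (c - (s : ℤ)) = q ^ (c - 2 - (s : ℤ)) := by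
        rw [← zpow_natCast q 2, ← zpow_neg, ← zpow_add₀ hq0]
        congr 1
        push_cast
        ring
      have h2 : q ^ 2 * q ^ ((s : ℤ) - c) = q ^ ((s : ℤ) - (c - 2)) := by
        rw [← zpow_natCast q 2, ← zpow_add₀ hq0]
        congr 1
        push_cast
        ring
      rw [h1, h2, ← smul_mul_assoc, ← mul_assoc]
end Lin
section Front
variable {k : Type} [Field k] {q : k}

lemma KKtc_front (c : ℤ) (t : ℕ) :
    KKtc k q c (t + 1) = KKtc k q (c - 1) t *
      ((q ^ ((t : ℤ) + 1) - q ^ (-((t : ℤ) + 1)))⁻¹ • lin k q (q ^ c) (q ^ (-c))) := by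
  induction t generalizing c with
  | zero =>
      rw [KKtc_succ]
      norm_num [KKtc]
  | succ s ih =>
      rw [KKtc_succ c (s + 1), ih c, KKtc_succ (c - 1) s]
      have e1 : c - ((s : ℤ) + 1) = (c - 1) - (s : ℤ) := by ring
      have e2 : ((s : ℤ) + 1) - c = (s : ℤ) - (c - 1) := by ring
      have ecast : (((s + 1 : ℕ)) : ℤ) = (s : ℤ) + 1 := by push_cast; ring
      rw [ecast, e1, e2, mul_assoc, mul_assoc]
      congr 1
      rw [smul_mul_smul_comm, smul_mul_smul_comm, mul_comm, lin_comm]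

end Front
section EF
variable {k : Type} [Field k] {q : k}

lemma smul_lin (r u v : k) : r • lin k q u v = lin k q (r * u) (r * v) := by
  simp only [lin, smul_sub, smul_smul]

lemma lin_add (u v u' v' : k) :
    lin k q u v + lin k q u' v' = lin k q (u + u') (v + v') := by
  simp only [lin, add_smul]
  abel

lemma smul_mul_lin {r : k} (X : Dq k q) (u v : k) :
    r • (X * lin k q u v) = X * lin k q (r * u) (r * v) := by
  rw [← smul_lin, mul_smul_comm]

lemma qint_zero : qint k q 0 = 0 := by simp [qint]

lemma pow2_inv (hq0 : q ≠ 0) : ((q:k) ^ 2)⁻¹ = q ^ (-2 : ℤ) := by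
  rw [← zpow_natCast q 2, ← zpow_neg]
  norm_num

lemma pow2_z : ((q:k) ^ 2) = q ^ (2 : ℤ) := by
  rw [← zpow_natCast q 2]
  norm_num

lemma scal1 (hq0 : q ≠ 0) (hd : q - q⁻¹ ≠ 0) (m : ℤ) :
    (q - q⁻¹)⁻¹ + (q^(m+1) - q^(-(m+1)))/(q - q⁻¹) * ((q - q⁻¹)⁻¹ * (q^(-2:ℤ) * q^(-m))) =
      (q^(m+2) - q^(-(m+2)))/(q - q⁻¹) * ((q - q⁻¹)⁻¹ * q^(-(m+1))) := by
  have key : (q - q⁻¹) + (q^(m+1) - q^(-(m+1))) * (q^(-2:ℤ) * q^(-m)) =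
      (q^(m+2) - q^(-(m+2))) * q^(-(m+1)) := by
    simp only [sub_mul, mul_sub, ← zpow_add₀ hq0]
    ring_nf
    simp only [zpow_neg_one, zpow_one]
    ring
  have e := mul_inv_cancel₀ hd
  linear_combination ((q - q⁻¹)⁻¹)^2 * key - (q - q⁻¹)⁻¹ * e

lemma scal2 (hq0 : q ≠ 0) (hd : q - q⁻¹ ≠ 0) (m : ℤ) :
    (q - q⁻¹)⁻¹ + (q^(m+1) - q^(-(m+1)))/(q - q⁻¹) * ((q - q⁻¹)⁻¹ * (q^(2:ℤ) * q^m)) =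
      (q^(m+2) - q^(-(m+2)))/(q - q⁻¹) * ((q - q⁻¹)⁻¹ * q^(m+1)) := by
  have key : (q - q⁻¹) + (q^(m+1) - q^(-(m+1))) * (q^(2:ℤ) * q^m) =
      (q^(m+2) - q^(-(m+2))) * q^(m+1) := by
    simp only [sub_mul, mul_sub, ← zpow_add₀ hq0]
    ring_nf
    simp only [zpow_neg_one, zpow_one]
    ring
  have e := mul_inv_cancel₀ hd
  linear_combination ((q - q⁻¹)⁻¹)^2 * key - (q - q⁻¹)⁻¹ * e

lemma E_mul_Fpow (hq0 : q ≠ 0) (hq : ∀ n : ℕ, 0 < n → q ^ n ≠ 1) (m : ℕ) :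
    DE k q * DF k q ^ (m + 1) = DF k q ^ (m + 1) * DE k q +
      qint k q (m + 1) • (DF k q ^ m *
        ((q - q⁻¹)⁻¹ • lin k q (q ^ (-(m : ℤ))) (q ^ (m : ℤ)))) := by
  have hd := hqd hq0 hq
  induction m with
  | zero =>
      have h1 : qint k q 1 = 1 := by
        simp only [qint, pow_one]; exact div_self hd
      simp only [zero_add, pow_one, pow_zero, one_mul, Nat.cast_zero, neg_zero, zpow_zero,
        h1, one_smul]
      rw [rEF]
      congr 2
      simp [lin]
  | succ m ih =>
      have h1 : (q - q⁻¹)⁻¹ • lin k q (q ^ (-(m:ℤ))) (q ^ (m:ℤ)) * DF k q =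
          DF k q * ((q - q⁻¹)⁻¹ • lin k q ((q^2)⁻¹ * q ^ (-(m:ℤ))) (q^2 * q ^ (m:ℤ))) := by
        rw [smul_mul_assoc, lin_mul_F hq0, mul_smul_comm]
      calc DE k q * DF k q ^ (m + 2)
          = (DE k q * DF k q ^ (m + 1)) * DF k q := by rw [pow_succ, ← mul_assoc]
        _ = DF k q ^ (m + 1) * (DE k q * DF k q) +
            qint k q (m + 1) • (DF k q ^ (m + 1) *
              ((q - q⁻¹)⁻¹ • lin k q ((q^2)⁻¹ * q ^ (-(m:ℤ))) (q^2 * q ^ (m:ℤ)))) := by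
            rw [ih, add_mul, smul_mul_assoc, mul_assoc, mul_assoc, h1, ← mul_assoc,
              ← mul_assoc, ← pow_succ]
        _ = DF k q ^ (m + 2) * DE k q + (DF k q ^ (m + 1) *
              ((q - q⁻¹)⁻¹ • lin k q 1 1) +
            qint k q (m + 1) • (DF k q ^ (m + 1) *
              ((q - q⁻¹)⁻¹ • lin k q ((q^2)⁻¹ * q ^ (-(m:ℤ))) (q^2 * q ^ (m:ℤ))))) := by
            rw [rEF, mul_add, ← mul_assoc, ← pow_succ, add_assoc]
            congr 3
            simp [lin]
        _ = DF k q ^ (m + 2) * DE k q +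
            qint k q (m + 2) • (DF k q ^ (m + 1) *
              ((q - q⁻¹)⁻¹ • lin k q (q ^ (-((m:ℤ)+1))) (q ^ ((m:ℤ)+1)))) := by
            congr 1
            simp only [smul_lin, smul_mul_lin]
            rw [← mul_add, lin_add]
            rw [qint_eq hq0 (m+1), qint_eq hq0 (m+2)]
            push_cast
            congr 2
            · rw [mul_one, pow2_inv hq0]
              exact scal1 hq0 hd m
            · rw [mul_one, pow2_z]
              exact scal2 hq0 hd m
        _ = DF k q ^ (m + 2) * DE k q +
            qint k q (m + 2) • (DF k q ^ (m + 1) *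
              ((q - q⁻¹)⁻¹ • lin k q (q ^ (-((m+1:ℕ) : ℤ))) (q ^ (((m+1:ℕ)) : ℤ)))) := by
            push_cast
            rfl

end EF
section Key
variable {k : Type} [Field k] {q : k}

lemma KKtc_one (c : ℤ) : KKtc k q c 1 = (q - q⁻¹)⁻¹ • lin k q (q ^ c) (q ^ (-c)) := by
  rw [KKtc_succ]
  norm_num [KKtc, zpow_one, zpow_neg_one]

lemma scal3 (hq0 : q ≠ 0) (hd : q - q⁻¹ ≠ 0) (a b t : ℤ)
    (hds : q ^ t - q ^ (-t) ≠ 0) :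
    (q^(a+1-t) - q^(-(a+1-t)))/(q - q⁻¹) * ((q^t - q^(-t))⁻¹ * q^(t-a-b-1)) +
      (q - q⁻¹)⁻¹ * q^(t-b) =
    (q^(a+1) - q^(-(a+1)))/(q - q⁻¹) * ((q^t - q^(-t))⁻¹ * q^(2*t-a-b-1)) := by
  have key : (q^(a+1-t) - q^(-(a+1-t))) * q^(t-a-b-1) + (q^t - q^(-t)) * q^(t-b) =
      (q^(a+1) - q^(-(a+1))) * q^(2*t-a-b-1) := by
    simp only [sub_mul, ← zpow_add₀ hq0]
    ring_nf
  have e1 := mul_inv_cancel₀ hd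
  have e2 := mul_inv_cancel₀ hds
  linear_combination ((q - q⁻¹)⁻¹ * (q^t - q^(-t))⁻¹) * key -
    ((q - q⁻¹)⁻¹ * q^(t-b)) * e2

lemma scal4 (hq0 : q ≠ 0) (hd : q - q⁻¹ ≠ 0) (a b t : ℤ)
    (hds : q ^ t - q ^ (-t) ≠ 0) :
    (q^(a+1-t) - q^(-(a+1-t)))/(q - q⁻¹) * ((q^t - q^(-t))⁻¹ * q^(a+b+1-t)) +
      (q - q⁻¹)⁻¹ * q^(b-t) =
    (q^(a+1) - q^(-(a+1)))/(q - q⁻¹) * ((q^t - q^(-t))⁻¹ * q^(a+b+1-2*t)) := by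
  have key : (q^(a+1-t) - q^(-(a+1-t))) * q^(a+b+1-t) + (q^t - q^(-t)) * q^(b-t) =
      (q^(a+1) - q^(-(a+1))) * q^(a+b+1-2*t) := by
    simp only [sub_mul, ← zpow_add₀ hq0]
    ring_nf
  have e1 := mul_inv_cancel₀ hd
  have e2 := mul_inv_cancel₀ hds
  linear_combination ((q - q⁻¹)⁻¹ * (q^t - q^(-t))⁻¹) * key -
    ((q - q⁻¹)⁻¹ * q^(b-t)) * e2

lemma key5 (hq0 : q ≠ 0) (hq : ∀ n : ℕ, 0 < n → q ^ n ≠ 1) (a b s : ℕ)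
    (hta : s + 1 ≤ a + 1) :
    qint k q (a + 1 - (s+1)) • KKtc k q (2*((s:ℤ)+1) - a - b - 2) (s+1)
      + KKtc k q (((s:ℤ)+1) - b) 1 * KKtc k q (2*((s:ℤ)+1) - a - b - 2) s
    = qint k q (a + 1) • KKtc k q (2*((s:ℤ)+1) - a - b - 1) (s+1) := by
  have hd := hqd hq0 hq
  have hds : q ^ ((s:ℤ)+1) - q ^ (-((s:ℤ)+1)) ≠ 0 := by
    have := zpow_sub_ne hq0 hq (s+1) (by omega)
    push_cast at this
    exact this
  set c : ℤ := 2*((s:ℤ)+1) - a - b with hc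
  have h1 : KKtc k q (c - 2) (s + 1) = KKtc k q (c - 2) s *
      ((q ^ ((s:ℤ)+1) - q ^ (-((s:ℤ)+1)))⁻¹ • lin k q (q ^ (c - 2 - s)) (q ^ ((s:ℤ) - (c-2)))) := by
    rw [KKtc_succ]
  have h2 : KKtc k q (c - 1) (s + 1) = KKtc k q (c - 2) s *
      ((q ^ ((s:ℤ)+1) - q ^ (-((s:ℤ)+1)))⁻¹ • lin k q (q ^ (c - 1)) (q ^ (-(c-1)))) := by
    rw [KKtc_front]
    congr 2
    ring
  have h3 : KKtc k q (((s:ℤ)+1) - b) 1 * KKtc k q (c - 2) s = KKtc k q (c - 2) s *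
      ((q - q⁻¹)⁻¹ • lin k q (q ^ (((s:ℤ)+1) - b)) (q ^ (-(((s:ℤ)+1) - b)))) := by
    rw [KKtc_one, smul_mul_assoc, lin_mul_KKtc, mul_smul_comm]
  rw [h1, h2, h3]
  simp only [smul_lin, smul_mul_lin]
  rw [← mul_add, lin_add]
  congr 2
  · rw [qint_eq hq0, qint_eq hq0]
    have hcast : ((a + 1 - (s+1) : ℕ) : ℤ) = (a:ℤ) + 1 - ((s:ℤ)+1) := by omega
    rw [hcast]
    push_cast
    have e1 : c - 2 - (s:ℤ) = ((s:ℤ)+1) - (a:ℤ) - b - 1 := by rw [hc]; try ring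
    have e2 : c - 1 = 2*((s:ℤ)+1) - a - b - 1 := by rw [hc]; try ring
    rw [e1, e2]
    exact scal3 hq0 hd a b ((s:ℤ)+1) hds
  · rw [qint_eq hq0, qint_eq hq0]
    have hcast : ((a + 1 - (s+1) : ℕ) : ℤ) = (a:ℤ) + 1 - ((s:ℤ)+1) := by omega
    rw [hcast]
    push_cast
    have e1 : (s:ℤ) - (c - 2) = (a:ℤ) + b + 1 - ((s:ℤ)+1) := by rw [hc]; try ring
    have e2 : -(c - 1) = (a:ℤ) + b + 1 - 2*((s:ℤ)+1) := by rw [hc]; try ring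
    have e3 : -((((s:ℤ)+1)) - b) = (b:ℤ) - ((s:ℤ)+1) := by ring
    rw [e1, e2, e3]
    exact scal4 hq0 hd a b ((s:ℤ)+1) hds

end Key
/-- The commutator term `[E, F^{(m)}]`-tail: `W 0 = 0`, `W (m+1) = F^{(m)} [K,K̃;-m;1]`. -/
def Wd (k : Type) [Field k] (q : k) : ℕ → Dq k q
  | 0 => 0
  | m + 1 => ((qfact k q m)⁻¹ • DF k q ^ m) * KKtc k q (-(m : ℤ)) 1

section Divided
variable {k : Type} [Field k] {q : k}

lemma E_Ed (hq0 : q ≠ 0) (hq : ∀ n : ℕ, 0 < n → q ^ n ≠ 1) (n : ℕ) :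
    DE k q * ((qfact k q n)⁻¹ • DE k q ^ n) =
      qint k q (n + 1) • ((qfact k q (n + 1))⁻¹ • DE k q ^ (n + 1)) := by
  rw [mul_smul_comm, ← pow_succ', smul_smul]
  congr 1
  rw [show qfact k q (n+1) = qfact k q n * qint k q (n+1) from rfl, mul_inv,
    ← mul_assoc, mul_comm (qint k q (n+1)), mul_assoc,
    mul_inv_cancel₀ (qint_ne hq0 hq (n+1) (by omega)), mul_one]

lemma E_Fd (hq0 : q ≠ 0) (hq : ∀ n : ℕ, 0 < n → q ^ n ≠ 1) (m : ℕ) :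
    DE k q * ((qfact k q m)⁻¹ • DF k q ^ m) =
      ((qfact k q m)⁻¹ • DF k q ^ m) * DE k q + Wd k q m := by
  cases m with
  | zero => simp [Wd, qfact]
  | succ m =>
      rw [mul_smul_comm, E_mul_Fpow hq0 hq m, smul_add, smul_smul,
        qfact_succ_inv hq0 hq m, ← smul_mul_assoc]
      congr 1
      rw [show Wd k q (m+1) = ((qfact k q m)⁻¹ • DF k q ^ m) * KKtc k q (-(m:ℤ)) 1 from rfl,
        KKtc_one, neg_neg, smul_mul_assoc, mul_smul_comm]

end Divided
section PerTerm
variable {k : Type} [Field k] {q : k}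

lemma per_split (hq0 : q ≠ 0) (hq : ∀ n : ℕ, 0 < n → q ^ n ≠ 1) (a b t : ℕ) (hta : t ≤ a) :
    DE k q * (((qfact k q (b-t))⁻¹ • DF k q ^ (b-t)) * KKtc k q (2*(t:ℤ) - a - b) t *
        ((qfact k q (a-t))⁻¹ • DE k q ^ (a-t)))
    = qint k q (a+1-t) • (((qfact k q (b-t))⁻¹ • DF k q ^ (b-t)) *
        KKtc k q (2*(t:ℤ) - a - b - 2) t * ((qfact k q (a+1-t))⁻¹ • DE k q ^ (a+1-t)))
      + Wd k q (b-t) * (KKtc k q (2*(t:ℤ) - a - b) t *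
        ((qfact k q (a-t))⁻¹ • DE k q ^ (a-t))) := by
  rw [mul_assoc, ← mul_assoc (DE k q), E_Fd hq0 hq, add_mul]
  congr 1
  · rw [mul_assoc, ← mul_assoc (DE k q), E_mul_KKtc hq0, mul_assoc, E_Ed hq0 hq,
      show a - t + 1 = a + 1 - t from by omega]
    rw [mul_smul_comm, mul_smul_comm, ← mul_assoc]

end PerTerm

section PerTerm2
variable {k : Type} [Field k] {q : k}

lemma per_term (hq0 : q ≠ 0) (hq : ∀ n : ℕ, 0 < n → q ^ n ≠ 1) (a b t : ℕ)
    (hta : t ≤ a) (htb : t + 1 ≤ b) :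
    qint k q (a+1-(t+1)) • (((qfact k q (b-(t+1)))⁻¹ • DF k q ^ (b-(t+1))) *
        KKtc k q (2*((t:ℤ)+1) - a - b - 2) (t+1) *
        ((qfact k q (a+1-(t+1)))⁻¹ • DE k q ^ (a+1-(t+1))))
      + Wd k q (b-t) * (KKtc k q (2*(t:ℤ) - a - b) t *
        ((qfact k q (a-t))⁻¹ • DE k q ^ (a-t)))
    = qint k q (a+1) • (((qfact k q (b-(t+1)))⁻¹ • DF k q ^ (b-(t+1))) *
        KKtc k q (2*((t:ℤ)+1) - a - b - 1) (t+1) *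
        ((qfact k q (a+1-(t+1)))⁻¹ • DE k q ^ (a+1-(t+1)))) := by
  have h1 : b - t = (b - (t+1)) + 1 := by omega
  have h2 : a - t = a + 1 - (t+1) := by omega
  have h3 : (-((b - (t+1) : ℕ) : ℤ)) = ((t:ℤ)+1) - b := by omega
  have h4 : 2*(t:ℤ) - a - b = 2*((t:ℤ)+1) - a - b - 2 := by ring
  rw [h1, h2, h4, show Wd k q ((b - (t+1)) + 1) =
      ((qfact k q (b-(t+1)))⁻¹ • DF k q ^ (b-(t+1))) *
        KKtc k q (-((b - (t+1) : ℕ) : ℤ)) 1 from rfl, h3]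
  -- now group as Fd * X * Ed + Fd * (Y * Ed)
  rw [mul_assoc _ (KKtc k q (((t:ℤ)+1) - b) 1), ← mul_assoc (KKtc k q (((t:ℤ)+1) - b) 1)]
  -- term1 : c • (Fd * H * Ed) -> Fd * (c • H) * Ed
  rw [show ∀ (c : k) (X Y Z : Dq k q), c • (X * Y * Z) = X * (c • Y) * Z from by
    intros; rw [mul_smul_comm, smul_mul_assoc], ← mul_assoc, ← add_mul, ← mul_add]
  rw [key5 hq0 hq a b t (by omega)]
  rw [show ∀ (c : k) (X Y Z : Dq k q), X * (c • Y) * Z = c • (X * Y * Z) from by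
    intros; rw [mul_smul_comm, smul_mul_assoc]]

end PerTerm2
section MainStep
variable {k : Type} [Field k] {q : k}

lemma main_step (hq0 : q ≠ 0) (hq : ∀ n : ℕ, 0 < n → q ^ n ≠ 1) (a b : ℕ) :
    DE k q * (∑ t ∈ Finset.range (min a b + 1),
        ((qfact k q (b - t))⁻¹ • DF k q ^ (b - t)) *
          KKtc k q (2 * (t : ℤ) - (a : ℤ) - (b : ℤ)) t *
          ((qfact k q (a - t))⁻¹ • DE k q ^ (a - t)))
    = qint k q (a + 1) • ∑ t ∈ Finset.range (min (a + 1) b + 1),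
        ((qfact k q (b - t))⁻¹ • DF k q ^ (b - t)) *
          KKtc k q (2 * (t : ℤ) - (a : ℤ) - (b : ℤ) - 1) t *
          ((qfact k q (a + 1 - t))⁻¹ • DE k q ^ (a + 1 - t)) := by
  rw [Finset.mul_sum]
  rw [Finset.sum_congr rfl (fun t ht => per_split hq0 hq a b t
    (by simp only [Finset.mem_range] at ht; omega))]
  rw [Finset.sum_add_distrib]
  have hcast : ∀ t : ℕ, (((t+1 : ℕ)) : ℤ) = (t : ℤ) + 1 := by intro t; push_cast; ring
  -- rewrite the (t+1)-indexed terms to match per_term shapes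
  rcases Nat.lt_or_ge a b with hab | hba
  · -- a < b
    rw [show min a b = a from by omega, show min (a + 1) b = a + 1 from by omega]
    rw [Finset.sum_range_succ'
      (fun t => qint k q (a+1-t) • (((qfact k q (b-t))⁻¹ • DF k q ^ (b-t)) *
        KKtc k q (2*(t:ℤ) - a - b - 2) t * ((qfact k q (a+1-t))⁻¹ • DE k q ^ (a+1-t)))) a]
    rw [Finset.sum_range_succ'
      (fun t => ((qfact k q (b - t))⁻¹ • DF k q ^ (b - t)) *
          KKtc k q (2 * (t : ℤ) - (a : ℤ) - (b : ℤ) - 1) t *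
          ((qfact k q (a + 1 - t))⁻¹ • DE k q ^ (a + 1 - t))) (a+1)]
    have hP0 : qint k q (a+1-(a+1)) • (((qfact k q (b-(a+1)))⁻¹ • DF k q ^ (b-(a+1))) *
        KKtc k q (2*(((a+1:ℕ)):ℤ) - a - b - 2) (a+1) *
        ((qfact k q (a+1-(a+1)))⁻¹ • DE k q ^ (a+1-(a+1)))) = 0 := by
      rw [Nat.sub_self, qint_zero, zero_smul]
    rw [show (∑ t ∈ Finset.range a, qint k q (a+1-(t+1)) •
        (((qfact k q (b-(t+1)))⁻¹ • DF k q ^ (b-(t+1))) *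
          KKtc k q (2*(((t+1:ℕ)):ℤ) - a - b - 2) (t+1) *
          ((qfact k q (a+1-(t+1)))⁻¹ • DE k q ^ (a+1-(t+1)))))
      = ∑ t ∈ Finset.range (a+1), qint k q (a+1-(t+1)) •
        (((qfact k q (b-(t+1)))⁻¹ • DF k q ^ (b-(t+1))) *
          KKtc k q (2*(((t+1:ℕ)):ℤ) - a - b - 2) (t+1) *
          ((qfact k q (a+1-(t+1)))⁻¹ • DE k q ^ (a+1-(t+1)))) from by
      rw [Finset.sum_range_succ, hP0, add_zero]]
    rw [smul_add, Finset.smul_sum]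
    rw [add_right_comm, ← Finset.sum_add_distrib]
    congr 1
    · apply Finset.sum_congr rfl
      intro t ht
      simp only [Finset.mem_range] at ht
      rw [hcast t]
      exact per_term hq0 hq a b t (by omega) (by omega)
  · -- b ≤ a
    rw [show min a b = b from by omega, show min (a + 1) b = b from by omega]
    rw [Finset.sum_range_succ
      (fun t => Wd k q (b-t) * (KKtc k q (2*(t:ℤ) - a - b) t *
        ((qfact k q (a-t))⁻¹ • DE k q ^ (a-t)))) b]
    rw [show Wd k q (b-b) * (KKtc k q (2*(b:ℤ) - a - b) b *
        ((qfact k q (a-b))⁻¹ • DE k q ^ (a-b))) = 0 from by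
      rw [Nat.sub_self, show Wd k q 0 = 0 from rfl, zero_mul], add_zero]
    rw [Finset.sum_range_succ'
      (fun t => qint k q (a+1-t) • (((qfact k q (b-t))⁻¹ • DF k q ^ (b-t)) *
        KKtc k q (2*(t:ℤ) - a - b - 2) t * ((qfact k q (a+1-t))⁻¹ • DE k q ^ (a+1-t)))) b]
    rw [Finset.sum_range_succ'
      (fun t => ((qfact k q (b - t))⁻¹ • DF k q ^ (b - t)) *
          KKtc k q (2 * (t : ℤ) - (a : ℤ) - (b : ℤ) - 1) t *
          ((qfact k q (a + 1 - t))⁻¹ • DE k q ^ (a + 1 - t))) b]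
    rw [smul_add, Finset.smul_sum]
    rw [add_right_comm, ← Finset.sum_add_distrib]
    congr 1
    apply Finset.sum_congr rfl
    intro t ht
    simp only [Finset.mem_range] at ht
    rw [hcast t]
    exact per_term hq0 hq a b t (by omega) (by omega)

end MainStep
/-- for all `a b : ℕ`,
`E^{(a)} F^{(b)} = Σ_{t=0}^{min(a,b)} F^{(b−t)} · [K,K̃;2t−a−b;t] · E^{(a−t)}` in `D_q`,
where `X^{(N)} = ([N]_q!)⁻¹ • X^N` are divided powers. -/
theorem divided_power_commutation (k : Type) [Field k] (q : k)
    (hq0 : q ≠ 0) (hq : ∀ n : ℕ, 0 < n → q ^ n ≠ 1) (a b : ℕ) :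
    ((qfact k q a)⁻¹ • DE k q ^ a) * ((qfact k q b)⁻¹ • DF k q ^ b) =
      ∑ t ∈ Finset.range (min a b + 1),
        ((qfact k q (b - t))⁻¹ • DF k q ^ (b - t)) *
          KKtc k q (2 * (t : ℤ) - (a : ℤ) - (b : ℤ)) t *
          ((qfact k q (a - t))⁻¹ • DE k q ^ (a - t)) := by
  induction a with
  | zero =>
      rw [show min 0 b = 0 from by omega]
      simp [Finset.sum_range_one, KKtc, qfact]
  | succ a ih =>
      have hQne := qint_ne hq0 hq (a + 1) (by omega)
      have h1 : ((qfact k q (a + 1))⁻¹ • DE k q ^ (a + 1)) =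
          (qint k q (a + 1))⁻¹ • (DE k q * ((qfact k q a)⁻¹ • DE k q ^ a)) := by
        rw [E_Ed hq0 hq a, inv_smul_smul₀ hQne]
      rw [h1, smul_mul_assoc, mul_assoc, ih, main_step hq0 hq a b, inv_smul_smul₀ hQne]
      apply Finset.sum_congr rfl
      intro t ht
      have : 2 * (t:ℤ) - (a:ℤ) - (b:ℤ) - 1 = 2 * (t:ℤ) - ((a+1 : ℕ):ℤ) - (b:ℤ) := by
        push_cast; ring
      rw [this]
end
end

section
/- For all c ∈ ℤ, t ∈ ℕ and integers p ≥ 1, one has q^{−pt}·[K,K̃;−c;t] = Σ_{j=0}^{t} (−1)^j · [K,K̃;p−c;t−j] · [p+j−1 choose j]_q · K^{j} · q^{−cj} in D_q. In particular, for integers c ≥ 1 and t ≥ 0, [K,K̃;−c;t] = Σ_{j=0}^{t} (−1)^j · [K,K̃;t−j] · [c+j−1 choose j]_q · K^{j} · q^{c(t−j)}. -/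
noncomputable section

/-! Shifting `c` by one in `[K,K̃;c;t]` shifts the index of every factor, so, all factors being
polynomials in the commuting elements `K` and `K̃⁻¹`, one gets the three-term relation
`q^{t+1}·[K,K̃;c+1;t+1] = [K,K̃;c;t+1] + q^{c+1}·[K,K̃;c;t]·K`.
Solved for `[K,K̃;-c;t+1]`, it turns the identity at level `p` (taken at `c - 1`) together with the
identity at level `p + 1` for `t` into the identity at level `p + 1` for `t + 1`: comparing
coefficients of `[K,K̃;p+1-c;t+1-j]·K^j` leaves exactly the q-Pascal rule
`[n+1 choose k+1] = q^{k+1}[n choose k+1] + q^{k-n}[n choose k]`, itself the identity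
`[a+b] = q^a[b] + q^{-b}[a]`. Level `p = 1` arises the same way from the trivial level `p = 0`,
and the second statement is the first one at `p = c`. -/

section QNumbers

variable {k : Type} [Field k] {q : k}

theorem qint_add (a b : ℕ) :
    qint k q (a + b) = q ^ a * qint k q b + q⁻¹ ^ b * qint k q a := by
  simp only [qint]
  ring

variable (hq0 : q ≠ 0) (hq : ∀ n : ℕ, 0 < n → q ^ n ≠ 1)
include hq0 hq

theorem pow_ne_inv_pow {n : ℕ} (hn : 0 < n) : q ^ n ≠ q⁻¹ ^ n := by
  intro h
  apply hq (2 * n) (by omega)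
  rw [two_mul, pow_add]
  nth_rewrite 2 [h]
  rw [← mul_pow, mul_inv_cancel₀ hq0, one_pow]

theorem qint_ne_zero {n : ℕ} (hn : 0 < n) : qint k q n ≠ 0 :=
  div_ne_zero (sub_ne_zero.2 (pow_ne_inv_pow hq0 hq hn))
    (sub_ne_zero.2 (by simpa using pow_ne_inv_pow hq0 hq one_pos))

theorem qfact_ne_zero (n : ℕ) : qfact k q n ≠ 0 := by
  induction n with
  | zero => exact one_ne_zero
  | succ n ih => exact mul_ne_zero ih (qint_ne_zero hq0 hq n.succ_pos)

theorem qbinom_zero_right (n : ℕ) : qbinom k q n 0 = 1 := by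
  simp [qbinom, qfact, qfact_ne_zero hq0 hq n]

theorem qbinom_self (n : ℕ) : qbinom k q n n = 1 := by
  simp [qbinom, qfact, qfact_ne_zero hq0 hq n]

theorem qbinom_succ_succ (m i : ℕ) :
    qbinom k q (m + i + 2) (i + 1) =
      q ^ (i + 1) * qbinom k q (m + i + 1) (i + 1) + q⁻¹ ^ (m + 1) * qbinom k q (m + i + 1) i := by
  have hstep : ∀ n, qfact k q (n + 1) = qfact k q n * qint k q (n + 1) := fun _ => rfl
  have hf := qfact_ne_zero hq0 hq (k := k)
  have hi : ∀ n, qint k q (n + 1) ≠ 0 := fun n => qint_ne_zero hq0 hq n.succ_pos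
  simp only [qbinom, show m + i + 2 - (i + 1) = m + 1 by omega, show m + i + 1 - (i + 1) = m by omega,
    show m + i + 1 - i = m + 1 by omega]
  rw [show m + i + 2 = (m + i + 1) + 1 by omega, hstep (m + i + 1), hstep i, hstep m,
    show m + i + 1 + 1 = (i + 1) + (m + 1) by omega, qint_add]
  field_simp [hf i, hf m, hf (m + i + 1), hi i, hi m]

end QNumbers

section Brackets

variable {k : Type} [Field k] {q : k}

theorem commute_DK_DKtinv : Commute (DK k q) (DKtinv k q) := by
  have h1 : DKt k q * DKtinv k q = 1 := by
    simpa [DKt, DKtinv] using RingQuot.mkAlgHom_rel k (DRel.KtKtinv (q := q))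
  have h2 : DKtinv k q * DKt k q = 1 := by
    simpa [DKt, DKtinv] using RingQuot.mkAlgHom_rel k (DRel.KtinvKt (q := q))
  have h3 : Commute (DK k q) (DKt k q) := by
    simpa [Commute, SemiconjBy, DK, DKt] using RingQuot.mkAlgHom_rel k (DRel.KKt (q := q))
  exact h3.units_inv_right (u := ⟨DKt k q, DKtinv k q, h1, h2⟩)

theorem commute_smul_sub_smul (a b a' b' : k) :
    Commute (a • DK k q - b • DKtinv k q) (a' • DK k q - b' • DKtinv k q) := by
  have h := commute_DK_DKtinv (k := k) (q := q)
  refine .sub_left (.sub_right ?_ ?_) (.sub_right ?_ ?_) <;> refine .smul_left (.smul_right ?_ _) _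
  exacts [.refl _, h, h.symm, .refl _]

theorem KKtc_add_one_succ (c : ℤ) (t : ℕ) :
    KKtc k q (c + 1) (t + 1) =
      (q ^ ((t : ℤ) + 1) - q ^ (-((t : ℤ) + 1)))⁻¹ •
        (KKtc k q c t * (q ^ (c + 1) • DK k q - q ^ (-(c + 1)) • DKtinv k q)) := by
  induction t with
  | zero => simp [KKtc]
  | succ t ih =>
    rw [KKtc, ih, KKtc, show c + 1 - ((t + 1 : ℕ) : ℤ) = c - t by push_cast; ring,
      show ((t + 1 : ℕ) : ℤ) - (c + 1) = t - c by push_cast; ring]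
    simp only [smul_mul_assoc, mul_smul_comm, smul_smul, mul_assoc,
      (commute_smul_sub_smul _ _ _ _).eq, mul_comm]

variable (hq0 : q ≠ 0) (hq : ∀ n : ℕ, 0 < n → q ^ n ≠ 1)
include hq0 hq

theorem zpow_smul_KKtc_add_one (c : ℤ) (t : ℕ) :
    q ^ ((t : ℤ) + 1) • KKtc k q (c + 1) (t + 1) =
      KKtc k q c (t + 1) + q ^ (c + 1) • (KKtc k q c t * DK k q) := by
  have e1 : q ^ (c - t) = q ^ (c + 1) * (q ^ ((t : ℤ) + 1))⁻¹ := by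
    rw [← zpow_neg, ← zpow_add₀ hq0]; ring_nf
  have e2 : q ^ ((t : ℤ) - c) = q ^ ((t : ℤ) + 1) * (q ^ (c + 1))⁻¹ := by
    rw [← zpow_neg, ← zpow_add₀ hq0]; ring_nf
  have hu : q ^ ((t : ℤ) + 1) ≠ 0 := zpow_ne_zero _ hq0
  have hu2 : (q ^ ((t : ℤ) + 1)) ^ 2 - 1 ≠ 0 := by
    rw [← Nat.cast_succ, zpow_natCast, ← pow_mul]
    exact sub_ne_zero.2 (hq _ (by positivity))
  have hv : q ^ (c + 1) ≠ 0 := zpow_ne_zero _ hq0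
  rw [KKtc_add_one_succ, KKtc, ← mul_smul_comm, ← mul_smul_comm, ← mul_smul_comm, ← mul_add, e1, e2]
  congr 1
  simp only [zpow_neg]
  generalize q ^ ((t : ℤ) + 1) = u at hu hu2 ⊢
  generalize q ^ (c + 1) = v at hv ⊢
  match_scalars <;> field_simp
  ring

end Brackets

section ConvSum

variable {R A : Type*} [CommSemiring R] [Semiring A] [Algebra R A]

def convSum (a : ℕ → R) (X : ℕ → A) (K : A) (t : ℕ) : A :=
  ∑ j ∈ Finset.range (t + 1), a j • (X (t - j) * K ^ j)

variable (a b : ℕ → R) (X : ℕ → A) (K : A) (t : ℕ)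

theorem convSum_zero : convSum a X K 0 = a 0 • X 0 := by
  simp [convSum]

theorem convSum_succ :
    convSum a X K (t + 1) = a 0 • X (t + 1) + convSum (fun j => a (j + 1)) X K t * K := by
  rw [convSum, Finset.sum_range_succ', add_comm, convSum, Finset.sum_mul]
  congr 1
  · simp
  · refine Finset.sum_congr rfl fun j _ => ?_
    rw [Nat.add_sub_add_right, pow_succ, smul_mul_assoc, mul_assoc]

theorem convSum_single : convSum (Pi.single 0 1 : ℕ → R) X K t = X t := by
  rw [convSum, Finset.sum_eq_single 0] <;> simp +contextual

theorem convSum_succ_of_rec {μ : R} (h0 : a 0 = b 0) (hs : ∀ j, a (j + 1) = b (j + 1) + μ * a j) :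
    convSum a X K (t + 1) = convSum b X K (t + 1) + μ • (convSum a X K t * K) := by
  rw [convSum_succ, convSum_succ b, h0]
  simp only [convSum, hs, add_smul, Finset.sum_add_distrib, add_mul, mul_smul, ← Finset.smul_sum,
    smul_mul_assoc, add_assoc]

end ConvSum

section Reduction

variable {k : Type} [Field k] {q : k}

def reductionCoeff (q : k) (p : ℕ) (c : ℤ) (j : ℕ) : k :=
  (-1 : k) ^ j * qbinom k q (p + j - 1) j * q ^ (-(c * (j : ℤ)))

variable (hq0 : q ≠ 0) (hq : ∀ n : ℕ, 0 < n → q ^ n ≠ 1)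
include hq0 hq

theorem reductionCoeff_zero (p : ℕ) (c : ℤ) : reductionCoeff q p c 0 = 1 := by
  simp [reductionCoeff, qbinom_zero_right hq0 hq]

theorem reductionCoeff_one_succ (c : ℤ) (j : ℕ) :
    reductionCoeff q 1 c (j + 1) = -q ^ (-c) * reductionCoeff q 1 c j := by
  simp only [reductionCoeff, Nat.add_sub_cancel_left, qbinom_self hq0 hq, pow_succ, Nat.cast_succ,
    mul_add_one, neg_add, zpow_add₀ hq0]
  ring

theorem reductionCoeff_succ_succ {p : ℕ} (hp : 1 ≤ p) (c : ℤ) (j : ℕ) :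
    reductionCoeff q (p + 1) c (j + 1) =
      reductionCoeff q p (c - 1) (j + 1) + -q ^ (-(p + c)) * reductionCoeff q (p + 1) c j := by
  obtain ⟨m, rfl⟩ : ∃ m, p = m + 1 := ⟨p - 1, by omega⟩
  have e1 : q ^ (-((c - 1) * ((j + 1 : ℕ) : ℤ))) = q ^ (j + 1) * q ^ (-(c * ((j + 1 : ℕ) : ℤ))) := by
    rw [← zpow_natCast, ← zpow_add₀ hq0]; congr 1; push_cast; ring
  have e2 : q ^ (-(((m + 1 : ℕ) : ℤ) + c)) * q ^ (-(c * (j : ℤ))) =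
      q⁻¹ ^ (m + 1) * q ^ (-(c * ((j + 1 : ℕ) : ℤ))) := by
    rw [← zpow_natCast, inv_zpow', ← zpow_add₀ hq0, ← zpow_add₀ hq0]; congr 1; push_cast; ring
  simp only [reductionCoeff, show m + 1 + 1 + (j + 1) - 1 = m + j + 2 by omega,
    show m + 1 + (j + 1) - 1 = m + j + 1 by omega, show m + 1 + 1 + j - 1 = m + j + 1 by omega,
    qbinom_succ_succ hq0 hq, e1]
  linear_combination (-1) ^ j * qbinom k q (m + j + 1) j * e2

theorem KKtc_reduction_step (p : ℕ) (a b : ℤ → ℕ → k)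
    (hb : ∀ (c : ℤ) (t : ℕ), q ^ (-((p : ℤ) * t)) • KKtc k q (-c) t =
      convSum (b c) (KKtc k q (p - c)) (DK k q) t)
    (h0 : ∀ c, a c 0 = b (c - 1) 0)
    (hs : ∀ c j, a c (j + 1) = b (c - 1) (j + 1) + -q ^ (-(p + c)) * a c j) (c : ℤ) (t : ℕ) :
    q ^ (-(((p + 1 : ℕ) : ℤ) * t)) • KKtc k q (-c) t =
      convSum (a c) (KKtc k q ((p + 1 : ℕ) - c)) (DK k q) t := by
  have hX : KKtc k q ((p + 1 : ℕ) - c) = KKtc k q (p - (c - 1)) := by congr 1; push_cast; ring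
  induction t with
  | zero =>
    have h := hb (c - 1) 0
    simp only [convSum_zero, KKtc] at h ⊢
    simpa [h0] using h
  | succ t ih =>
    rw [hX, convSum_succ_of_rec _ _ _ _ _ (h0 c) (hs c), ← hb (c - 1) (t + 1), ← hX, ← ih,
      show -(c - 1) = -c + 1 by ring]
    have hu : q ^ ((t : ℤ) + 1) ≠ 0 := zpow_ne_zero _ hq0
    rw [← inv_smul_eq_iff₀ hu |>.mpr (zpow_smul_KKtc_add_one hq0 hq (-c) t).symm, smul_mul_assoc]
    match_scalars <;> simp only [mul_one, neg_mul, ← zpow_neg, ← zpow_add₀ hq0] <;> ring_nf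

theorem KKtc_reduction {p : ℕ} (hp : 1 ≤ p) (c : ℤ) (t : ℕ) :
    q ^ (-((p : ℤ) * t)) • KKtc k q (-c) t =
      convSum (reductionCoeff q p c) (KKtc k q (p - c)) (DK k q) t := by
  induction p, hp using Nat.le_induction generalizing c t with
  | base =>
    -- level `0` is the trivial identity, with coefficients `Pi.single 0 1`; `reductionCoeff q 0`
    -- is not that, since `qbinom k q (j - 1) j ≠ 0`
    refine KKtc_reduction_step hq0 hq 0 _ (fun _ => Pi.single 0 1) (fun c t => ?_)
      (fun c => reductionCoeff_zero hq0 hq 1 c) (fun c j => ?_) c t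
    · simpa using (convSum_single (R := k) (KKtc k q (-c)) (DK k q) t).symm
    · simp [reductionCoeff_one_succ hq0 hq]
  | succ p hp ih =>
    exact KKtc_reduction_step hq0 hq p _ _ ih (fun c => by simp only [reductionCoeff_zero hq0 hq])
      (reductionCoeff_succ_succ hq0 hq hp) c t

end Reduction

/-- for `c : ℤ`, `t : ℕ` and `p ≥ 1`,
`q^{−pt}·[K,K̃;−c;t] = Σ_{j=0}^{t} (−1)^j·[K,K̃;p−c;t−j]·[p+j−1 choose j]_q·K^j·q^{−cj}`;
in particular for integers `c ≥ 1`, `t ≥ 0`,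
`[K,K̃;−c;t] = Σ_{j=0}^{t} (−1)^j·[K,K̃;t−j]·[c+j−1 choose j]_q·K^j·q^{c(t−j)}`. -/
theorem KKtc_reduction_K (k : Type) [Field k] (q : k)
    (hq0 : q ≠ 0) (hq : ∀ n : ℕ, 0 < n → q ^ n ≠ 1) :
    (∀ (c : ℤ) (t p : ℕ), 1 ≤ p →
        (q ^ (-((p : ℤ) * t))) • KKtc k q (-c) t =
          ∑ j ∈ Finset.range (t + 1),
            ((-1 : k) ^ j * qbinom k q (p + j - 1) j * q ^ (-(c * (j : ℤ)))) •
              (KKtc k q ((p : ℤ) - c) (t - j) * DK k q ^ j)) ∧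
    (∀ c t : ℕ, 1 ≤ c →
        KKtc k q (-(c : ℤ)) t =
          ∑ j ∈ Finset.range (t + 1),
            ((-1 : k) ^ j * qbinom k q (c + j - 1) j * q ^ (c * (t - j))) •
              (KKtc k q 0 (t - j) * DK k q ^ j)) := by
  refine ⟨fun c t p hp => KKtc_reduction hq0 hq hp c t, fun c t hc => ?_⟩
  have h := KKtc_reduction hq0 hq hc c t
  rw [sub_self, ← eq_inv_smul_iff₀ (zpow_ne_zero _ hq0), convSum, Finset.smul_sum] at h
  rw [h]
  refine Finset.sum_congr rfl fun j hj => ?_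
  rw [smul_smul, reductionCoeff]
  congr 1
  have hjt : j ≤ t := Nat.lt_succ_iff.mp (Finset.mem_range.mp hj)
  have e : (q ^ (-((c : ℤ) * t)))⁻¹ * q ^ (-((c : ℤ) * j)) = q ^ (c * (t - j)) := by
    rw [← zpow_neg, ← zpow_add₀ hq0, ← zpow_natCast]
    push_cast [hjt]
    ring_nf
  linear_combination (-1 : k) ^ j * qbinom k q (c + j - 1) j * e
end
end

section
/- For any w, λ ∈ k^×, the formulas K·m_i = wλq^{−2i}·m_i, K̃·m_i = w⁻¹λq^{−2i}·m_i, F·m_i = m_{i+1}, E·m_0 = 0, and E·m_i = [i]_q·w·(λq^{1−i} − λ⁻¹q^{i−1})/(q − q⁻¹)·m_{i−1} for i ≥ 1 define a D_q-module structure on the k-vector space with basis {m_i : i ∈ ℕ}: there is a unique k-algebra homomorphism from D_q to the endomorphism algebra of this space taking E, F, K, K̃ to these operators (and K⁻¹, K̃⁻¹ to the inverse operators). Moreover, the resulting left D_q-module M_w(λ) is isomorphic to the quotient of D_q by the left ideal D_q·E + D_q·(K − wλ) + D_q·(K̃ − w⁻¹λ). -/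
noncomputable section

/-- Action of `K` on the Verma module `M_w(λ)`: `K·m_i = wλq^{−2i}·m_i`. -/
def vK (k : Type) [Field k] (q w lam : k) : (ℕ →₀ k) →ₗ[k] (ℕ →₀ k) :=
  Finsupp.lift (ℕ →₀ k) k ℕ fun i =>
    (w * lam * q ^ (-(2 * (i : ℤ)))) • Finsupp.single i 1

/-- Action of `K⁻¹` on `M_w(λ)` (the inverse operator of `vK`). -/
def vKinv (k : Type) [Field k] (q w lam : k) : (ℕ →₀ k) →ₗ[k] (ℕ →₀ k) :=
  Finsupp.lift (ℕ →₀ k) k ℕ fun i =>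
    ((w * lam * q ^ (-(2 * (i : ℤ))))⁻¹) • Finsupp.single i 1

/-- Action of `K̃` on `M_w(λ)`: `K̃·m_i = w⁻¹λq^{−2i}·m_i`. -/
def vKt (k : Type) [Field k] (q w lam : k) : (ℕ →₀ k) →ₗ[k] (ℕ →₀ k) :=
  Finsupp.lift (ℕ →₀ k) k ℕ fun i =>
    (w⁻¹ * lam * q ^ (-(2 * (i : ℤ)))) • Finsupp.single i 1

/-- Action of `K̃⁻¹` on `M_w(λ)` (the inverse operator of `vKt`). -/
def vKtinv (k : Type) [Field k] (q w lam : k) : (ℕ →₀ k) →ₗ[k] (ℕ →₀ k) :=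
  Finsupp.lift (ℕ →₀ k) k ℕ fun i =>
    ((w⁻¹ * lam * q ^ (-(2 * (i : ℤ))))⁻¹) • Finsupp.single i 1

/-- Action of `F` on `M_w(λ)`: `F·m_i = m_{i+1}`. -/
def vF (k : Type) [Field k] : (ℕ →₀ k) →ₗ[k] (ℕ →₀ k) :=
  Finsupp.lift (ℕ →₀ k) k ℕ fun i => Finsupp.single (i + 1) 1

/-- Action of `E` on `M_w(λ)`: `E·m_0 = 0` and
`E·m_i = [i]_q·w·(λq^{1−i} − λ⁻¹q^{i−1})/(q − q⁻¹)·m_{i−1}` for `i ≥ 1`. -/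
def vE (k : Type) [Field k] (q w lam : k) : (ℕ →₀ k) →ₗ[k] (ℕ →₀ k) :=
  Finsupp.lift (ℕ →₀ k) k ℕ fun i =>
    if i = 0 then 0
    else
      (qint k q i * w * (lam * q ^ (1 - (i : ℤ)) - lam⁻¹ * q ^ ((i : ℤ) - 1)) / (q - q⁻¹)) •
        Finsupp.single (i - 1) 1

/-- `ρ` realizes the Verma module `M_w(λ)` on `ℕ →₀ k`. -/
def VermaCond (k : Type) [Field k] (q w lam : k)
    (ρ : Dq k q →ₐ[k] Module.End k (ℕ →₀ k)) : Prop :=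
  ρ (DE k q) = vE k q w lam ∧ ρ (DF k q) = vF k ∧
  ρ (DK k q) = vK k q w lam ∧ ρ (DKinv k q) = vKinv k q w lam ∧
  ρ (DKt k q) = vKt k q w lam ∧ ρ (DKtinv k q) = vKtinv k q w lam

/-!
The operators satisfy the defining relations of `D_q`: `K`, `K̃` and their inverses are
diagonal with weights `c q⁻²ⁱ`, so they commute with each other and rescale `F` and `E` by
`q^{∓2}`, while `EF − FE = (K − K̃⁻¹)/(q − q⁻¹)` is the recursion
`e_{i+1} = e_i + (wλq⁻²ⁱ − wλ⁻¹q²ⁱ)/(q − q⁻¹)` for the coefficients `e_i` of `E`.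
Uniqueness holds because `D_q` is generated by its six generators.

For the isomorphism, the class `v` of `1` in `D_q/I` satisfies `Ev = 0`, `Kv = wλ v`,
`K̃v = w⁻¹λ v`, and the same recursion shows that in any `D_q`-module the vectors `Fⁱv`
of such a `v` transform exactly like the `m_i`. Hence `m_i ↦ Fⁱv` is `D_q`-linear; it is inverse to
`[x] ↦ x·m_0`, which is well defined because `I` annihilates `m_0`.
-/

open Finsupp

lemma RingQuot.linearMap_apply_eq_smul_of_ι {R X M N : Type*} [CommSemiring R]
    {r : FreeAlgebra R X → FreeAlgebra R X → Prop} [AddCommMonoid M] [Module R M]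
    [AddCommMonoid N] [Module (RingQuot r) N] [Module R N] [IsScalarTower R (RingQuot r) N]
    (ρ : RingQuot r →ₐ[R] Module.End R M) (ψ : M →ₗ[R] N)
    (h : ∀ g m, ψ (ρ (RingQuot.mkAlgHom R r (FreeAlgebra.ι R g)) m) =
      RingQuot.mkAlgHom R r (FreeAlgebra.ι R g) • ψ m)
    (x : RingQuot r) (m : M) : ψ (ρ x m) = x • ψ m := by
  obtain ⟨y, rfl⟩ := RingQuot.mkAlgHom_surjective R r x
  induction y using FreeAlgebra.induction generalizing m with
  | grade0 c => rw [AlgHom.commutes, AlgHom.commutes, Module.algebraMap_end_apply, map_smul,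
      algebraMap_smul]
  | grade1 g => exact h g m
  | mul y z hy hz => rw [map_mul, map_mul, Module.End.mul_apply, hy, hz, mul_smul]
  | add y z hy hz => rw [map_add, map_add, LinearMap.add_apply, map_add, hy, hz, add_smul]

namespace Verma

variable {k : Type} [Field k]

def weight (c q : k) (i : ℕ) : k := c * q ^ (-(2 * (i : ℤ)))

def eCoeff (q w lam : k) (i : ℕ) : k :=
  qint k q i * w * (lam * q ^ (1 - (i : ℤ)) - lam⁻¹ * q ^ ((i : ℤ) - 1)) / (q - q⁻¹)

lemma weight_eq_mul_inv_pow (c q : k) (i : ℕ) : weight c q i = c * (q ^ i)⁻¹ ^ 2 := by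
  rw [weight, mul_comm (2 : ℤ), zpow_neg, zpow_mul, zpow_natCast, zpow_ofNat, inv_pow]

lemma weight_zero (c q : k) : weight c q 0 = c := by simp [weight]

lemma weight_succ (c q : k) (i : ℕ) : weight c q (i + 1) = (q ^ 2)⁻¹ * weight c q i := by
  rw [weight_eq_mul_inv_pow, weight_eq_mul_inv_pow, pow_succ]
  ring

lemma weight_ne_zero {c q : k} (hc : c ≠ 0) (hq : q ≠ 0) (i : ℕ) : weight c q i ≠ 0 :=
  mul_ne_zero hc (zpow_ne_zero _ hq)

lemma eCoeff_zero (q w lam : k) : eCoeff q w lam 0 = 0 := by simp [eCoeff, qint]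

lemma eCoeff_succ {q : k} (hq : q ≠ 0) (w lam : k) (i : ℕ) :
    eCoeff q w lam (i + 1) = eCoeff q w lam i +
      (q - q⁻¹)⁻¹ * (weight (w * lam) q i - (weight (w⁻¹ * lam) q i)⁻¹) := by
  rcases eq_or_ne (q - q⁻¹) 0 with hd | hd
  · -- both sides vanish, since `x / 0 = 0`
    simp [eCoeff, hd]
  have ha : q ^ i ≠ 0 := pow_ne_zero i hq
  have h₁ : q ^ (1 - ((i + 1 : ℕ) : ℤ)) = (q ^ i)⁻¹ := by
    rw [Nat.cast_succ, sub_add_cancel_right, zpow_neg, zpow_natCast]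
  have h₂ : q ^ (((i + 1 : ℕ) : ℤ) - 1) = q ^ i := by
    rw [Nat.cast_succ, add_sub_cancel_right, zpow_natCast]
  have h₃ : q ^ (1 - (i : ℤ)) = q * (q ^ i)⁻¹ := by
    rw [zpow_sub₀ hq, zpow_one, zpow_natCast, div_eq_mul_inv]
  have h₄ : q ^ ((i : ℤ) - 1) = q ^ i * q⁻¹ := by
    rw [zpow_sub₀ hq, zpow_one, zpow_natCast, div_eq_mul_inv]
  rw [eCoeff, eCoeff, qint, qint, h₁, h₂, h₃, h₄]
  simp only [weight_eq_mul_inv_pow, mul_inv, inv_pow, inv_inv, pow_succ]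
  -- `lam` may be `0`: keep `lam⁻¹` as an opaque atom for `field_simp`
  generalize lam⁻¹ = μ
  field_simp
  ring

def diag (c : ℕ → k) : Module.End k (ℕ →₀ k) :=
  Finsupp.lift (ℕ →₀ k) k ℕ fun i => c i • single i 1

lemma diag_single (c : ℕ → k) (i : ℕ) (b : k) : diag c (single i b) = single i (c i * b) := by
  simp [diag, smul_single, mul_comm]

lemma diag_mul_diag (c d : ℕ → k) : diag c * diag d = diag (c * d) := by
  ext i : 2
  simp [diag_single]

lemma diag_one : diag (1 : ℕ → k) = 1 := by
  ext i : 2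
  simp [diag_single]

lemma diag_mul_diag_inv {c : ℕ → k} (hc : ∀ i, c i ≠ 0) : diag c * diag c⁻¹ = 1 := by
  rw [diag_mul_diag, ← diag_one]
  exact congrArg diag (funext fun i => mul_inv_cancel₀ (hc i))

lemma diag_inv_mul_diag {c : ℕ → k} (hc : ∀ i, c i ≠ 0) : diag c⁻¹ * diag c = 1 := by
  rw [diag_mul_diag, ← diag_one]
  exact congrArg diag (funext fun i => inv_mul_cancel₀ (hc i))

variable {q w lam : k}

lemma vK_eq_diag : vK k q w lam = diag (weight (w * lam) q) := rfl
lemma vKinv_eq_diag : vKinv k q w lam = diag (weight (w * lam) q)⁻¹ := rfl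
lemma vKt_eq_diag : vKt k q w lam = diag (weight (w⁻¹ * lam) q) := rfl
lemma vKtinv_eq_diag : vKtinv k q w lam = diag (weight (w⁻¹ * lam) q)⁻¹ := rfl

lemma vF_single (i : ℕ) (b : k) : vF k (single i b) = single (i + 1) b := by
  simp [vF, smul_single]

lemma vE_single_zero (b : k) : vE k q w lam (single 0 b) = 0 := by
  simp [vE]

lemma vE_single_succ (i : ℕ) (b : k) :
    vE k q w lam (single (i + 1) b) = single i (eCoeff q w lam (i + 1) * b) := by
  simp [vE, eCoeff, smul_single, mul_comm]

lemma diag_mul_vF {c : ℕ → k} {s : k} (hc : ∀ i, c (i + 1) = s * c i) :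
    diag c * vF k = s • (vF k * diag c) := by
  ext i : 2
  simp [vF_single, diag_single, hc, smul_single]

lemma diag_mul_vE {c : ℕ → k} {s : k} (hs : s ≠ 0) (hc : ∀ i, c (i + 1) = s⁻¹ * c i) :
    diag c * vE k q w lam = s • (vE k q w lam * diag c) := by
  refine Finsupp.lhom_ext fun i b => ?_
  simp only [Module.End.mul_apply, LinearMap.smul_apply, diag_single]
  rcases i with _ | i
  · rw [vE_single_zero, vE_single_zero, map_zero, smul_zero]
  · rw [vE_single_succ, vE_single_succ, diag_single, hc, smul_single, smul_eq_mul]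
    congr 1
    field_simp

lemma vE_mul_vF (hq : q ≠ 0) :
    vE k q w lam * vF k =
      vF k * vE k q w lam + (q - q⁻¹)⁻¹ • (vK k q w lam - vKtinv k q w lam) := by
  refine Finsupp.lhom_ext fun i b => ?_
  simp only [Module.End.mul_apply, LinearMap.add_apply, LinearMap.smul_apply,
    LinearMap.sub_apply, vF_single, vE_single_succ, vK_eq_diag, vKtinv_eq_diag, diag_single,
    Pi.inv_apply, ← single_sub, smul_single, smul_eq_mul, eCoeff_succ hq]
  rcases i with _ | i
  · rw [vE_single_zero, map_zero, zero_add, eCoeff_zero]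
    congr 1
    ring
  · rw [vE_single_succ, vF_single, ← single_add]
    congr 1
    ring

def vermaGen (q w lam : k) : DGen → Module.End k (ℕ →₀ k)
  | .E => vE k q w lam
  | .F => vF k
  | .K => vK k q w lam
  | .Kinv => vKinv k q w lam
  | .Kt => vKt k q w lam
  | .Ktinv => vKtinv k q w lam

lemma lift_vermaGen_of_rel (hq : q ≠ 0) (hw : w ≠ 0) (hlam : lam ≠ 0)
    {x y : FreeAlgebra k DGen} (h : DRel k q x y) :
    FreeAlgebra.lift k (vermaGen q w lam) x = FreeAlgebra.lift k (vermaGen q w lam) y := by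
  have hK : ∀ i, weight (w * lam) q i ≠ 0 := weight_ne_zero (mul_ne_zero hw hlam) hq
  have hKt : ∀ i, weight (w⁻¹ * lam) q i ≠ 0 :=
    weight_ne_zero (mul_ne_zero (inv_ne_zero hw) hlam) hq
  have hq2 : q ^ 2 ≠ 0 := pow_ne_zero 2 hq
  cases h <;> simp only [map_mul, map_smul, map_one, map_add, map_sub, FreeAlgebra.lift_ι_apply,
    vermaGen]
  case KE => rw [vK_eq_diag]; exact diag_mul_vE hq2 (weight_succ _ q)
  case KF => rw [vK_eq_diag]; exact diag_mul_vF (weight_succ _ q)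
  case KtE => rw [vKt_eq_diag]; exact diag_mul_vE hq2 (weight_succ _ q)
  case KtF => rw [vKt_eq_diag]; exact diag_mul_vF (weight_succ _ q)
  case KKinv => exact diag_mul_diag_inv hK
  case KinvK => exact diag_inv_mul_diag hK
  case KtKtinv => exact diag_mul_diag_inv hKt
  case KtinvKt => exact diag_inv_mul_diag hKt
  case KKt => rw [vK_eq_diag, vKt_eq_diag, diag_mul_diag, diag_mul_diag, mul_comm]
  case EF => exact vE_mul_vF hq

def vermaRep (hq : q ≠ 0) (hw : w ≠ 0) (hlam : lam ≠ 0) :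
    Dq k q →ₐ[k] Module.End k (ℕ →₀ k) :=
  RingQuot.liftAlgHom k
    ⟨FreeAlgebra.lift k (vermaGen q w lam), fun _ _ h => lift_vermaGen_of_rel hq hw hlam h⟩

variable (q) in
def dqGen : DGen → Dq k q
  | .E => DE k q
  | .F => DF k q
  | .K => DK k q
  | .Kinv => DKinv k q
  | .Kt => DKt k q
  | .Ktinv => DKtinv k q

lemma mkAlgHom_ι (g : DGen) :
    RingQuot.mkAlgHom k (DRel k q) (FreeAlgebra.ι k g) = dqGen q g := by
  cases g <;> rfl

lemma vermaCond_iff {ρ : Dq k q →ₐ[k] Module.End k (ℕ →₀ k)} :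
    VermaCond k q w lam ρ ↔ ∀ g, ρ (dqGen q g) = vermaGen q w lam g := by
  constructor
  · rintro ⟨hE, hF, hK, hKinv, hKt, hKtinv⟩ (_ | _ | _ | _ | _ | _) <;> assumption
  · intro h
    exact ⟨h .E, h .F, h .K, h .Kinv, h .Kt, h .Ktinv⟩

lemma vermaCond_vermaRep (hq : q ≠ 0) (hw : w ≠ 0) (hlam : lam ≠ 0) :
    VermaCond k q w lam (vermaRep hq hw hlam) :=
  vermaCond_iff.2 fun g => by
    rw [vermaRep, ← mkAlgHom_ι, RingQuot.liftAlgHom_mkAlgHom_apply, FreeAlgebra.lift_ι_apply]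

lemma eq_of_vermaCond {ρ₁ ρ₂ : Dq k q →ₐ[k] Module.End k (ℕ →₀ k)}
    (h₁ : VermaCond k q w lam ρ₁) (h₂ : VermaCond k q w lam ρ₂) : ρ₁ = ρ₂ :=
  RingQuot.ringQuot_ext' k _ _ <| FreeAlgebra.hom_ext <| funext fun g => by
    simp only [Function.comp_apply, AlgHom.comp_apply, mkAlgHom_ι, vermaCond_iff.1 h₁,
      vermaCond_iff.1 h₂]

lemma DK_mul_DF : DK k q * DF k q = (q ^ 2)⁻¹ • (DF k q * DK k q) := by
  simpa only [map_mul, map_smul, DK, DF] using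
    RingQuot.mkAlgHom_rel k (DRel.KF (k := k) (q := q))

lemma DKt_mul_DF : DKt k q * DF k q = (q ^ 2)⁻¹ • (DF k q * DKt k q) := by
  simpa only [map_mul, map_smul, DKt, DF] using
    RingQuot.mkAlgHom_rel k (DRel.KtF (k := k) (q := q))

lemma DKinv_mul_DK : DKinv k q * DK k q = 1 := by
  simpa only [map_mul, map_one, DK, DKinv] using
    RingQuot.mkAlgHom_rel k (DRel.KinvK (k := k) (q := q))

lemma DKtinv_mul_DKt : DKtinv k q * DKt k q = 1 := by
  simpa only [map_mul, map_one, DKt, DKtinv] using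
    RingQuot.mkAlgHom_rel k (DRel.KtinvKt (k := k) (q := q))

lemma DE_mul_DF :
    DE k q * DF k q = DF k q * DE k q + (q - q⁻¹)⁻¹ • (DK k q - DKtinv k q) := by
  simpa only [map_mul, map_add, map_smul, map_sub, DE, DF, DK, DKtinv] using
    RingQuot.mkAlgHom_rel k (DRel.EF (k := k) (q := q))

section Module

variable {A N : Type*} [Ring A] [Algebra k A] [AddCommGroup N] [Module A N] [Module k N]
  [IsScalarTower k A N]

lemma smul_smul_eq_of_mul_eq_smul_mul {a f : A} {s c : k} (h : a * f = s • (f * a)) {v : N}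
    (hv : a • v = c • v) : a • f • v = (s * c) • f • v := by
  rw [← mul_smul, h, smul_assoc, mul_smul, hv, smul_comm f c, smul_smul]

lemma smul_pow_smul_eq_weight {a f : A} {q c : k} (h : a * f = (q ^ 2)⁻¹ • (f * a)) {v : N}
    (hv : a • v = c • v) (i : ℕ) : a • f ^ i • v = weight c q i • f ^ i • v := by
  induction i with
  | zero => rw [pow_zero, one_smul, weight_zero, hv]
  | succ i ih => rw [pow_succ', mul_smul, smul_smul_eq_of_mul_eq_smul_mul h ih, weight_succ]

lemma smul_eq_inv_smul_of_mul_eq_one {a b : A} (h : a * b = 1) {c : k} {v : N}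
    (hv : b • v = c • v) : a • v = c⁻¹ • v := by
  have hv' : c • a • v = v := by rw [← smul_comm, ← hv, ← mul_smul, h, one_smul]
  rcases eq_or_ne c 0 with rfl | hc
  · rw [zero_smul] at hv'
    rw [← hv', smul_zero, smul_zero]
  · conv_rhs => rw [← hv', smul_smul, inv_mul_cancel₀ hc, one_smul]

end Module

section HighestWeight

variable {N : Type*} [AddCommGroup N] [Module (Dq k q) N] [Module k N]

variable (q) in
def IsHighestWeightVector (w lam : k) (v : N) : Prop :=
  DE k q • v = 0 ∧ DK k q • v = (w * lam) • v ∧ DKt k q • v = (w⁻¹ * lam) • v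

variable (q) in
def vermaLift (v : N) : (ℕ →₀ k) →ₗ[k] N :=
  linearCombination k fun i => DF k q ^ i • v

variable {v : N}

lemma vermaLift_single (i : ℕ) (b : k) : vermaLift q v (single i b) = b • DF k q ^ i • v :=
  linearCombination_single k b i

lemma vermaLift_single_zero : vermaLift q v (single 0 1) = v := by
  rw [vermaLift_single, pow_zero, one_smul, one_smul]

variable [IsScalarTower k (Dq k q) N]

namespace IsHighestWeightVector

lemma DK_smul (hv : IsHighestWeightVector q w lam v) (i : ℕ) :
    DK k q • DF k q ^ i • v = weight (w * lam) q i • DF k q ^ i • v :=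
  smul_pow_smul_eq_weight DK_mul_DF hv.2.1 i

lemma DKt_smul (hv : IsHighestWeightVector q w lam v) (i : ℕ) :
    DKt k q • DF k q ^ i • v = weight (w⁻¹ * lam) q i • DF k q ^ i • v :=
  smul_pow_smul_eq_weight DKt_mul_DF hv.2.2 i

lemma DKinv_smul (hv : IsHighestWeightVector q w lam v) (i : ℕ) :
    DKinv k q • DF k q ^ i • v = (weight (w * lam) q i)⁻¹ • DF k q ^ i • v :=
  smul_eq_inv_smul_of_mul_eq_one DKinv_mul_DK (hv.DK_smul i)

lemma DKtinv_smul (hv : IsHighestWeightVector q w lam v) (i : ℕ) :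
    DKtinv k q • DF k q ^ i • v = (weight (w⁻¹ * lam) q i)⁻¹ • DF k q ^ i • v :=
  smul_eq_inv_smul_of_mul_eq_one DKtinv_mul_DKt (hv.DKt_smul i)

lemma DE_smul (hq : q ≠ 0) (hv : IsHighestWeightVector q w lam v) (i : ℕ) :
    DE k q • DF k q ^ (i + 1) • v = eCoeff q w lam (i + 1) • DF k q ^ i • v := by
  have hEF (j : ℕ) : DE k q • DF k q ^ (j + 1) • v = DF k q • DE k q • DF k q ^ j • v +
      ((q - q⁻¹)⁻¹ * (weight (w * lam) q j - (weight (w⁻¹ * lam) q j)⁻¹)) •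
        DF k q ^ j • v := by
    rw [pow_succ', mul_smul, ← mul_smul (DE k q), DE_mul_DF, add_smul, mul_smul (DF k q),
      smul_assoc, sub_smul, hv.DK_smul, hv.DKtinv_smul, ← sub_smul, smul_smul ((q - q⁻¹)⁻¹)]
  induction i with
  | zero => rw [hEF, pow_zero, one_smul, hv.1, smul_zero, zero_add, eCoeff_succ hq, eCoeff_zero,
      zero_add]
  | succ i ih =>
    rw [hEF, ih, smul_comm, ← mul_smul, ← pow_succ', ← add_smul, ← eCoeff_succ hq]

end IsHighestWeightVector

lemma vermaLift_apply_eq_smul (hq : q ≠ 0) {ρ : Dq k q →ₐ[k] Module.End k (ℕ →₀ k)}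
    (hρ : VermaCond k q w lam ρ) (hv : IsHighestWeightVector q w lam v) (x : Dq k q)
    (m : ℕ →₀ k) : vermaLift q v (ρ x m) = x • vermaLift q v m := by
  refine RingQuot.linearMap_apply_eq_smul_of_ι ρ _ (fun g m => ?_) x m
  rw [mkAlgHom_ι, vermaCond_iff.1 hρ g]
  induction m using Finsupp.induction_linear with
  | zero => rw [map_zero, map_zero, smul_zero]
  | add m m' hm hm' => rw [map_add, map_add, map_add, hm, hm', smul_add]
  | single i b =>
    rw [vermaLift_single, smul_comm]
    cases g <;> rw [dqGen, vermaGen]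
    · rcases i with _ | i
      · rw [vE_single_zero, map_zero, pow_zero, one_smul, hv.1, smul_zero]
      · rw [vE_single_succ, vermaLift_single, hv.DE_smul hq, smul_smul, mul_comm]
    · rw [vF_single, vermaLift_single, ← mul_smul, ← pow_succ']
    · rw [vK_eq_diag, diag_single, vermaLift_single, hv.DK_smul, smul_smul, mul_comm]
    · rw [vKinv_eq_diag, diag_single, vermaLift_single, hv.DKinv_smul, smul_smul,
        Pi.inv_apply, mul_comm]
    · rw [vKt_eq_diag, diag_single, vermaLift_single, hv.DKt_smul, smul_smul, mul_comm]
    · rw [vKtinv_eq_diag, diag_single, vermaLift_single, hv.DKtinv_smul, smul_smul,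
        Pi.inv_apply, mul_comm]

end HighestWeight

variable (q w lam) in
def vermaIdeal : Ideal (Dq k q) :=
  Ideal.span {DE k q, DK k q - (w * lam) • (1 : Dq k q),
    DKt k q - (w⁻¹ * lam) • (1 : Dq k q)}

lemma isHighestWeightVector_mk_one :
    IsHighestWeightVector q w lam (Submodule.Quotient.mk 1 : Dq k q ⧸ vermaIdeal q w lam) := by
  have hmem {x : Dq k q} (hx : x = DE k q ∨ x = DK k q - (w * lam) • (1 : Dq k q) ∨
      x = DKt k q - (w⁻¹ * lam) • (1 : Dq k q)) : x ∈ vermaIdeal q w lam :=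
    Ideal.subset_span hx
  refine ⟨?_, ?_, ?_⟩ <;>
    rw [← Submodule.Quotient.mk_smul, smul_eq_mul, mul_one]
  · exact (Submodule.Quotient.mk_eq_zero _).2 (hmem (.inl rfl))
  · rw [← Submodule.Quotient.mk_smul, Submodule.Quotient.eq]
    exact hmem (.inr (.inl rfl))
  · rw [← Submodule.Quotient.mk_smul, Submodule.Quotient.eq]
    exact hmem (.inr (.inr rfl))

section Realization

variable {ρ : Dq k q →ₐ[k] Module.End k (ℕ →₀ k)}

lemma apply_single_zero_eq_zero_of_mem (hρ : VermaCond k q w lam ρ) {x : Dq k q}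
    (hx : x ∈ vermaIdeal q w lam) : ρ x (single 0 1) = 0 := by
  induction hx using Submodule.span_induction with
  | mem y hy =>
    obtain ⟨hE, -, hK, -, hKt, -⟩ := hρ
    rcases hy with rfl | rfl | rfl
    · rw [hE, vE_single_zero]
    · rw [map_sub, map_smul, map_one, LinearMap.sub_apply, hK, vK_eq_diag, diag_single,
        weight_zero, LinearMap.smul_apply, Module.End.one_apply, smul_single, smul_eq_mul,
        sub_self]
    · rw [map_sub, map_smul, map_one, LinearMap.sub_apply, hKt, vKt_eq_diag, diag_single,
        weight_zero, LinearMap.smul_apply, Module.End.one_apply, smul_single, smul_eq_mul,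
        sub_self]
  | zero => rw [map_zero, LinearMap.zero_apply]
  | add y z _ _ hy hz => rw [map_add, LinearMap.add_apply, hy, hz, add_zero]
  | smul a y _ hy => rw [smul_eq_mul, map_mul, Module.End.mul_apply, hy, map_zero]

lemma apply_DF_pow_single_zero (hρ : VermaCond k q w lam ρ) (i : ℕ) :
    ρ (DF k q ^ i) (single 0 1) = single i 1 := by
  induction i with
  | zero => rw [pow_zero, map_one, Module.End.one_apply]
  | succ i ih => rw [pow_succ', map_mul, Module.End.mul_apply, ih, hρ.2.1, vF_single]

def evalSingleZero (hρ : VermaCond k q w lam ρ) :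
    (Dq k q ⧸ vermaIdeal q w lam) →ₗ[k] (ℕ →₀ k) :=
  ((vermaIdeal q w lam).restrictScalars k).liftQ
      (LinearMap.applyₗ (single 0 1) ∘ₗ ρ.toLinearMap)
      (fun _ hx => apply_single_zero_eq_zero_of_mem hρ hx) ∘ₗ
    (Submodule.Quotient.restrictScalarsEquiv k _).symm.toLinearMap

lemma evalSingleZero_mk (hρ : VermaCond k q w lam ρ) (x : Dq k q) :
    evalSingleZero hρ (Submodule.Quotient.mk x) = ρ x (single 0 1) := rfl

lemma evalSingleZero_smul (hρ : VermaCond k q w lam ρ) (x : Dq k q)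
    (m : Dq k q ⧸ vermaIdeal q w lam) :
    evalSingleZero hρ (x • m) = ρ x (evalSingleZero hρ m) := by
  obtain ⟨y, rfl⟩ := Submodule.Quotient.mk_surjective _ m
  rw [← Submodule.Quotient.mk_smul, evalSingleZero_mk, evalSingleZero_mk, smul_eq_mul, map_mul,
    Module.End.mul_apply]

lemma exists_linearEquiv_quotient (hq : q ≠ 0) (hρ : VermaCond k q w lam ρ) :
    ∃ e : (Dq k q ⧸ vermaIdeal q w lam) ≃ₗ[k] (ℕ →₀ k),
      ∀ (x : Dq k q) (m : Dq k q ⧸ vermaIdeal q w lam), e (x • m) = ρ x (e m) := by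
  have hv := isHighestWeightVector_mk_one (q := q) (w := w) (lam := lam)
  refine ⟨.ofLinearMap (evalSingleZero hρ) (vermaLift q (Submodule.Quotient.mk 1)) ?_ ?_,
    evalSingleZero_smul hρ⟩
  · refine Finsupp.lhom_ext fun i b => ?_
    rw [LinearMap.comp_apply, vermaLift_single, map_smul, ← Submodule.Quotient.mk_smul,
      smul_eq_mul, mul_one, evalSingleZero_mk, apply_DF_pow_single_zero hρ, LinearMap.id_apply,
      smul_single, smul_eq_mul, mul_one]
  · refine LinearMap.ext fun m => ?_
    obtain ⟨x, rfl⟩ := Submodule.Quotient.mk_surjective _ m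
    rw [LinearMap.comp_apply, evalSingleZero_mk, vermaLift_apply_eq_smul hq hρ hv,
      vermaLift_single_zero, ← Submodule.Quotient.mk_smul, smul_eq_mul, mul_one, LinearMap.id_apply]

end Realization

end Verma

theorem verma_module_structure_general (k : Type) [Field k] (q w lam : k)
    (hq0 : q ≠ 0) (hw : w ≠ 0) (hlam : lam ≠ 0) :
    (∃! ρ : Dq k q →ₐ[k] Module.End k (ℕ →₀ k), VermaCond k q w lam ρ) ∧
    (∀ ρ : Dq k q →ₐ[k] Module.End k (ℕ →₀ k), VermaCond k q w lam ρ →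
      ∃ e : (Dq k q ⧸ (Ideal.span {DE k q, DK k q - (w * lam) • (1 : Dq k q),
              DKt k q - (w⁻¹ * lam) • (1 : Dq k q)} : Ideal (Dq k q))) ≃ₗ[k] (ℕ →₀ k),
        ∀ (x : Dq k q) (m : Dq k q ⧸ (Ideal.span {DE k q, DK k q - (w * lam) • (1 : Dq k q),
              DKt k q - (w⁻¹ * lam) • (1 : Dq k q)} : Ideal (Dq k q))),
          e (x • m) = ρ x (e m)) :=
  ⟨⟨Verma.vermaRep hq0 hw hlam, Verma.vermaCond_vermaRep hq0 hw hlam,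
      fun _ hρ => Verma.eq_of_vermaCond hρ (Verma.vermaCond_vermaRep hq0 hw hlam)⟩,
    fun _ hρ => Verma.exists_linearEquiv_quotient hq0 hρ⟩

/-- the Verma module formulas define a `D_q`-module structure on the
`k`-vector space with basis `{m_i : i ∈ ℕ}` (uniquely), and the resulting module
`M_w(λ)` is isomorphic to `D_q/(D_q·E + D_q·(K − wλ) + D_q·(K̃ − w⁻¹λ))`. -/
theorem verma_module_structure (k : Type) [Field k] (q w lam : k)
    (hq0 : q ≠ 0) (hq1 : q ^ 2 ≠ 1) (hw : w ≠ 0) (hlam : lam ≠ 0) :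
    (∃! ρ : Dq k q →ₐ[k] Module.End k (ℕ →₀ k), VermaCond k q w lam ρ) ∧
    (∀ ρ : Dq k q →ₐ[k] Module.End k (ℕ →₀ k), VermaCond k q w lam ρ →
      ∃ e : (Dq k q ⧸ (Ideal.span {DE k q, DK k q - (w * lam) • (1 : Dq k q),
              DKt k q - (w⁻¹ * lam) • (1 : Dq k q)} : Ideal (Dq k q))) ≃ₗ[k] (ℕ →₀ k),
        ∀ (x : Dq k q) (m : Dq k q ⧸ (Ideal.span {DE k q, DK k q - (w * lam) • (1 : Dq k q),
              DKt k q - (w⁻¹ * lam) • (1 : Dq k q)} : Ideal (Dq k q))),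
          e (x • m) = ρ x (e m)) :=
  verma_module_structure_general k q w lam hq0 hw hlam
end
end

section
/- Assume q is not a root of unity and λ = qⁿ or λ = −qⁿ for some integer n ≥ 0. Then the subspace W := span_k{m_i : i ≥ n+1} is a D_q-submodule of M_w(λ); every proper D_q-submodule of M_w(λ) is contained in W (so W is the unique maximal proper submodule); W is isomorphic as a D_q-module to M_w(q^{−2(n+1)}λ); and the quotient M_w(λ)/W is a simple D_q-module of k-dimension n+1. -/
noncomputable section

/-!
Write `λ = e qⁿ` with `e = ±1`. With integer quantum numbers `[m]`, the action of `E` becomes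
`E·m_i = e w [i] [n+1-i] m_{i-1}`, whose coefficient vanishes at `i = n+1` and nowhere in
`1 ≤ i ≤ n`, because `q` is not a root of unity. Hence `W = span{m_i : i > n}` is stable.
If a submodule `U` has a vector with a nonzero coordinate at some `j ≤ n`, then `U` contains `m_j`,
since `K` acts diagonally with pairwise distinct eigenvalues `wλq^{-2i}`; lowering with `E` reaches
`m_0` and raising with `F` then gives everything, so `U` is the whole module.
The shift `m_i ↦ m_{i+n+1}` intertwines `M_w(q^{-2(n+1)}λ)` with `W` because
`[i] [-n-1-i] = [i+n+1] [-i]`.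
-/

open Finsupp

section NotRootOfUnity

variable {k : Type} [Field k] {q : k}

theorem zpow_injective_of_pow_ne_one (hq0 : q ≠ 0) (hq : ∀ m : ℕ, 0 < m → q ^ m ≠ 1) :
    Function.Injective fun m : ℤ => q ^ m := by
  have hfin : ¬IsOfFinOrder (Units.mk0 q hq0) := by
    rw [isOfFinOrder_iff_pow_eq_one]
    rintro ⟨m, hm, h⟩
    exact hq m hm (by simpa [Units.ext_iff] using h)
  intro a b hab
  refine injective_zpow_iff_not_isOfFinOrder.mpr hfin (Units.ext ?_)
  simpa using hab

variable (q) in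
def qnum (m : ℤ) : k := (q ^ m - q ^ (-m)) / (q - q⁻¹)

theorem qint_eq_qnum (i : ℕ) : qint k q i = qnum q i := by
  simp [qint, qnum, zpow_neg]

theorem qnum_zero : qnum q 0 = 0 := by simp [qnum]

theorem qnum_neg (m : ℤ) : qnum q (-m) = -qnum q m := by
  rw [qnum, qnum, neg_neg, ← neg_div, neg_sub]

theorem qnum_ne_zero (hq0 : q ≠ 0) (hq : ∀ m : ℕ, 0 < m → q ^ m ≠ 1) {m : ℤ} (hm : m ≠ 0) :
    qnum q m ≠ 0 := by
  have hinj := zpow_injective_of_pow_ne_one hq0 hq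
  have hden : q - q⁻¹ ≠ 0 := by
    simpa [sub_ne_zero] using hinj.ne (show (1 : ℤ) ≠ -1 by norm_num)
  exact div_ne_zero (sub_ne_zero.mpr (hinj.ne (show m ≠ -m by omega))) hden

end NotRootOfUnity

section Finsupp

variable {k : Type} {ι : Type*} [Field k]

def diagEnd (μ : ι → k) : (ι →₀ k) →ₗ[k] (ι →₀ k) :=
  Finsupp.lift (ι →₀ k) k ι fun i => μ i • single i 1

theorem diagEnd_single (μ : ι → k) (i : ι) (c : k) :
    diagEnd μ (single i c) = single i (μ i * c) := by
  simp [diagEnd, smul_single, mul_comm]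

theorem diagEnd_apply (μ : ι → k) (v : ι →₀ k) (j : ι) : diagEnd μ v j = μ j * v j := by
  induction v using Finsupp.induction_linear with
  | zero => simp
  | add f g hf hg => simp [hf, hg, mul_add]
  | single i c =>
    classical
    rw [diagEnd_single, single_apply, single_apply]
    split_ifs with h <;> simp [h]

theorem diagEnd_mem_supported (μ : ι → k) {s : Set ι} {v : ι →₀ k} (hv : v ∈ supported k k s) :
    diagEnd μ v ∈ supported k k s := by
  rw [mem_supported'] at hv ⊢
  intro j hj
  rw [diagEnd_apply, hv j hj, mul_zero]

theorem lmapDomain_comp_diagEnd {ι' : Type*} (f : ι → ι') {μ : ι' → k} {μ' : ι → k}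
    (h : ∀ i, μ' i = μ (f i)) :
    lmapDomain k k f ∘ₗ diagEnd μ' = diagEnd μ ∘ₗ lmapDomain k k f := by
  ext i
  simp [diagEnd_single, h]

theorem single_mem_of_diagEnd_mem {μ : ι → k} (hμ : Function.Injective μ)
    {W : Submodule k (ι →₀ k)} (hW : ∀ v ∈ W, diagEnd μ v ∈ W) {v : ι →₀ k} (hv : v ∈ W)
    (i : ι) :
    single i (v i) ∈ W := by
  classical
  suffices key : ∀ S : Finset ι, ∀ v ∈ W, v.support ⊆ S → ∀ i, single i (v i) ∈ W from
    key v.support v hv subset_rfl i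
  intro S
  induction S using Finset.induction_on with
  | empty =>
    intro v _ hS i
    simp [support_eq_empty.mp (Finset.subset_empty.mp hS)]
  | insert a S haS ih =>
    intro v hv hS
    -- subtracting `μ a • v` kills the `a`-component and rescales the others by `μ j - μ a ≠ 0`
    set v' := diagEnd μ v - μ a • v
    have hv'_apply (j : ι) : v' j = (μ j - μ a) * v j := by
      simp [v', diagEnd_apply, sub_mul]
    have hv'S : v'.support ⊆ S := by
      intro j hj
      rw [mem_support_iff, hv'_apply] at hj
      rcases Finset.mem_insert.mp (hS (mem_support_iff.mpr (right_ne_zero_of_mul hj))) with rfl | h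
      · simp at hj
      · exact h
    have hne (j : ι) (hj : j ≠ a) : single j (v j) ∈ W := by
      have := W.smul_mem (μ j - μ a)⁻¹
        (ih v' (sub_mem (hW v hv) (W.smul_mem _ hv)) hv'S j)
      rwa [smul_single, hv'_apply, smul_eq_mul,
        inv_mul_cancel_left₀ (sub_ne_zero.mpr (hμ.ne hj))] at this
    intro i
    by_cases hi : i = a
    · subst hi
      have hsum : v = single i (v i) + ∑ j ∈ S, single j (v j) :=
        calc v = v.sum single := (sum_single v).symm
          _ = ∑ j ∈ insert i S, single j (v j) := sum_of_support_subset v hS _ (by simp)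
          _ = _ := Finset.sum_insert haS
      rw [eq_sub_of_add_eq hsum.symm]
      exact sub_mem hv (Submodule.sum_mem _ fun j hj => hne j (ne_of_mem_of_not_mem hj haS))
    · exact hne i hi

theorem eq_top_of_forall_single_mem {W : Submodule k (ι →₀ k)} (h : ∀ i, single i 1 ∈ W) :
    W = ⊤ := by
  rw [eq_top_iff, ← (Finsupp.basisSingleOne (R := k) (ι := ι)).span_eq, Submodule.span_le]
  rintro _ ⟨i, rfl⟩
  simpa using h i

theorem finrank_quotient_supported {s : Set ι} (hs : sᶜ.Finite) :
    Module.finrank k ((ι →₀ k) ⧸ supported k k s) = sᶜ.ncard := by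
  have : Fintype ↑sᶜ := hs.fintype
  have hcompl : IsCompl (supported k k s) (supported k k sᶜ) :=
    ⟨disjoint_supported_supported isCompl_compl.disjoint,
      codisjoint_supported_supported isCompl_compl.codisjoint⟩
  rw [(Submodule.quotientEquivOfIsCompl _ _ hcompl).finrank_eq,
    (supportedEquivFinsupp sᶜ).finrank_eq, Module.finrank_finsupp_self, Set.ncard_eq_toFinset_card',
    Set.toFinset_card]

theorem map_mem_supported_of_single {s : Set ι} (f : (ι →₀ k) →ₗ[k] (ι →₀ k))
    (h : ∀ i ∈ s, f (single i 1) ∈ supported k k s) {v : ι →₀ k} (hv : v ∈ supported k k s) :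
    f v ∈ supported k k s := by
  rw [supported_eq_span_single] at hv
  refine (Submodule.span_le (p := (supported k k s).comap f)).mpr ?_ hv
  rintro _ ⟨i, hi, rfl⟩
  exact h i hi

theorem span_single_eq_supported (n : ℕ) :
    Submodule.span k {f : ℕ →₀ k | ∃ i : ℕ, n + 1 ≤ i ∧ f = single i 1} =
      supported k k (Set.Ici (n + 1)) := by
  rw [supported_eq_span_single]
  congr 1
  ext f
  exact exists_congr fun i => and_congr_right fun _ => eq_comm

theorem range_lmapDomain_add (d : ℕ) :
    LinearMap.range (lmapDomain k k (· + d)) = supported k k (Set.Ici d) := by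
  rw [LinearMap.range_eq_map, ← supported_univ, lmapDomain_supported, ← Set.Ici_bot,
    Set.image_add_const_Ici, bot_eq_zero, zero_add]

end Finsupp

section VermaAction

variable {k : Type} [Field k]

theorem vF_single (i : ℕ) (c : k) : vF k (single i c) = single (i + 1) c := by
  simp [vF, smul_single]

def vEcoeff (q w lam : k) (i : ℕ) : k :=
  qint k q i * w * (lam * q ^ (1 - (i : ℤ)) - lam⁻¹ * q ^ ((i : ℤ) - 1)) / (q - q⁻¹)

theorem vE_single_zero (q w lam c : k) : vE k q w lam (single 0 c) = 0 := by
  simp [vE]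

theorem vE_single_succ (q w lam : k) (i : ℕ) (c : k) :
    vE k q w lam (single (i + 1) c) = vEcoeff q w lam (i + 1) • single i c := by
  simp [vE, vEcoeff, smul_single, mul_comm]

theorem vEcoeff_eq {q : k} (hq0 : q ≠ 0) (w : k) {e : k} (he : e * e = 1) (m : ℤ) (i : ℕ) :
    vEcoeff q w (e * q ^ m) i = e * w * qnum q i * qnum q (m + 1 - i) := by
  have he' : e⁻¹ = e := inv_eq_of_mul_eq_one_right he
  have h1 : e * q ^ m * q ^ (1 - (i : ℤ)) = e * q ^ (m + 1 - i) := by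
    rw [mul_assoc, ← zpow_add₀ hq0]; ring_nf
  have h2 : (e * q ^ m)⁻¹ * q ^ ((i : ℤ) - 1) = e * q ^ (-(m + 1 - i)) := by
    rw [mul_inv, he', ← zpow_neg, mul_assoc, ← zpow_add₀ hq0]; ring_nf
  rw [vEcoeff, qint_eq_qnum, h1, h2, qnum, qnum]
  ring

end VermaAction

section HighestWeight

variable {k : Type} [Field k] {q : k}

theorem exists_sign_mul_zpow {lam : k} {n : ℕ} (hlam : lam = q ^ n ∨ lam = -(q ^ n)) :
    ∃ e : k, e * e = 1 ∧ lam = e * q ^ (n : ℤ) := by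
  rcases hlam with rfl | rfl
  · exact ⟨1, one_mul 1, by simp⟩
  · exact ⟨-1, by simp, by simp⟩

theorem vEcoeff_highest_succ (hq0 : q ≠ 0) (w : k) {e : k} (he : e * e = 1) (n : ℕ) :
    vEcoeff q w (e * q ^ (n : ℤ)) (n + 1) = 0 := by
  rw [vEcoeff_eq hq0 w he, show (n : ℤ) + 1 - ((n + 1 : ℕ) : ℤ) = 0 by push_cast; ring,
    qnum_zero, mul_zero]

theorem vEcoeff_ne_zero (hq0 : q ≠ 0) (hq : ∀ m : ℕ, 0 < m → q ^ m ≠ 1) {w : k} (hw : w ≠ 0)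
    {e : k} (he : e * e = 1) {n i : ℕ} (hi0 : i ≠ 0) (hin : i ≤ n) :
    vEcoeff q w (e * q ^ (n : ℤ)) i ≠ 0 := by
  rw [vEcoeff_eq hq0 w he]
  refine mul_ne_zero (mul_ne_zero (mul_ne_zero (left_ne_zero_of_mul_eq_one he) hw)
    (qnum_ne_zero hq0 hq (by exact_mod_cast hi0))) (qnum_ne_zero hq0 hq ?_)
  omega

theorem vEcoeff_shift (hq0 : q ≠ 0) (w : k) {e : k} (he : e * e = 1) (n i : ℕ) :
    vEcoeff q w (q ^ (-(2 * ((n : ℤ) + 1))) * (e * q ^ (n : ℤ))) i =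
      vEcoeff q w (e * q ^ (n : ℤ)) (i + (n + 1)) := by
  rw [show q ^ (-(2 * ((n : ℤ) + 1))) * (e * q ^ (n : ℤ)) = e * q ^ (-(n : ℤ) - 2) by
      rw [mul_left_comm, ← zpow_add₀ hq0]; ring_nf,
    vEcoeff_eq hq0 w he, vEcoeff_eq hq0 w he,
    show -(n : ℤ) - 2 + 1 - i = -(i + (n + 1) : ℕ) by push_cast; ring,
    show (n : ℤ) + 1 - (i + (n + 1) : ℕ) = -i by push_cast; ring, qnum_neg, qnum_neg]
  ring

theorem vK_weight_injective (hq0 : q ≠ 0) (hq : ∀ m : ℕ, 0 < m → q ^ m ≠ 1) {w lam : k}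
    (hwl : w * lam ≠ 0) : Function.Injective fun i : ℕ => w * lam * q ^ (-(2 * (i : ℤ))) := by
  intro i j hij
  have := zpow_injective_of_pow_ne_one hq0 hq (mul_left_cancel₀ hwl hij)
  omega

end HighestWeight

namespace Dq

variable {k : Type} [Field k] {q : k}

variable (k q) in
abbrev gen (g : DGen) : Dq k q := RingQuot.mkAlgHom k (DRel k q) (FreeAlgebra.ι k g)

theorem induction {P : Dq k q → Prop} (algebraMap : ∀ c : k, P (algebraMap k (Dq k q) c))
    (gen : ∀ g, P (gen k q g)) (add : ∀ a b, P a → P b → P (a + b))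
    (mul : ∀ a b, P a → P b → P (a * b)) (x : Dq k q) : P x := by
  obtain ⟨y, rfl⟩ := RingQuot.mkAlgHom_surjective k (DRel k q) x
  induction y using FreeAlgebra.induction with
  | grade0 c => rw [AlgHom.commutes]; exact algebraMap c
  | grade1 g => exact gen g
  | add a b ha hb => rw [map_add]; exact add _ _ ha hb
  | mul a b ha hb => rw [map_mul]; exact mul _ _ ha hb

variable {V V' : Type*} [AddCommGroup V] [Module k V] [AddCommGroup V'] [Module k V']

theorem mapsTo_of_gen (ρ : Dq k q →ₐ[k] Module.End k V) {W : Submodule k V}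
    (h : ∀ g, ∀ v ∈ W, ρ (gen k q g) v ∈ W) (x : Dq k q) : ∀ v ∈ W, ρ x v ∈ W := by
  induction x using Dq.induction with
  | algebraMap c => simpa using fun v hv => W.smul_mem c hv
  | gen g => exact h g
  | add a b ha hb => simpa using fun v hv => W.add_mem (ha v hv) (hb v hv)
  | mul a b ha hb => simpa using fun v hv => ha _ (hb v hv)

theorem intertwines_of_gen (ρ : Dq k q →ₐ[k] Module.End k V) (ρ' : Dq k q →ₐ[k] Module.End k V')
    (ι : V' →ₗ[k] V) (h : ∀ g, ι ∘ₗ ρ' (gen k q g) = ρ (gen k q g) ∘ₗ ι) (x : Dq k q) :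
    ι ∘ₗ ρ' x = ρ x ∘ₗ ι := by
  induction x using Dq.induction with
  | algebraMap c => ext v; simp
  | gen g => exact h g
  | add a b ha hb => rw [map_add, map_add, LinearMap.comp_add, LinearMap.add_comp, ha, hb]
  | mul a b ha hb =>
    rw [map_mul, map_mul, Module.End.mul_eq_comp, Module.End.mul_eq_comp, ← LinearMap.comp_assoc,
      ha, LinearMap.comp_assoc, hb, LinearMap.comp_assoc]

end Dq

section VermaModule

variable {k : Type} [Field k] {q : k}

def vermaAction (q w lam : k) : DGen → Module.End k (ℕ →₀ k)
  | .E => vE k q w lam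
  | .F => vF k
  | .K => vK k q w lam
  | .Kinv => vKinv k q w lam
  | .Kt => vKt k q w lam
  | .Ktinv => vKtinv k q w lam

theorem VermaCond.map_gen {w lam : k} {ρ : Dq k q →ₐ[k] Module.End k (ℕ →₀ k)}
    (hρ : VermaCond k q w lam ρ) (g : DGen) : ρ (Dq.gen k q g) = vermaAction q w lam g := by
  obtain ⟨hE, hF, hK, hKinv, hKt, hKtinv⟩ := hρ
  cases g <;> assumption

theorem vermaAction_mapsTo_supported (hq0 : q ≠ 0) (w : k) {e : k} (he : e * e = 1) (n : ℕ)
    (g : DGen) {v : ℕ →₀ k} (hv : v ∈ supported k k (Set.Ici (n + 1))) :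
    vermaAction q w (e * q ^ (n : ℤ)) g v ∈ supported k k (Set.Ici (n + 1)) := by
  cases g
  case E =>
    refine map_mem_supported_of_single _ (fun i hi => ?_) hv
    obtain ⟨j, rfl⟩ : ∃ j, i = j + 1 := Nat.exists_eq_add_one.mpr (by simp at hi; omega)
    show vE k q w _ _ ∈ _
    rw [vE_single_succ]
    rcases eq_or_ne j n with rfl | hjn
    · rw [vEcoeff_highest_succ hq0 w he, zero_smul]
      exact zero_mem _
    · exact Submodule.smul_mem _ _ (single_mem_supported k 1 (by simp at hi ⊢; omega))
  case F =>
    refine map_mem_supported_of_single _ (fun i hi => ?_) hv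
    show vF k _ ∈ _
    rw [vF_single]
    exact single_mem_supported k 1 (by simp at hi ⊢; omega)
  all_goals exact diagEnd_mem_supported _ hv

theorem invariant_eq_top_of_single_mem (hq0 : q ≠ 0) (hq : ∀ m : ℕ, 0 < m → q ^ m ≠ 1)
    {w : k} (hw : w ≠ 0) {e : k} (he : e * e = 1) {n : ℕ} {W : Submodule k (ℕ →₀ k)}
    (hE : ∀ v ∈ W, vE k q w (e * q ^ (n : ℤ)) v ∈ W) (hF : ∀ v ∈ W, vF k v ∈ W)
    {j : ℕ} (hjn : j ≤ n) (hj : single j (1 : k) ∈ W) : W = ⊤ := by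
  have h0 : single 0 (1 : k) ∈ W := by
    induction j with
    | zero => exact hj
    | succ j ih =>
      refine ih (by omega) ((W.smul_mem_iff (vEcoeff_ne_zero hq0 hq hw he (by omega) hjn)).mp ?_)
      rw [← vE_single_succ]
      exact hE _ hj
  refine eq_top_of_forall_single_mem fun i => ?_
  induction i with
  | zero => exact h0
  | succ i ih => simpa [vF_single] using hF _ ih

theorem VermaCond.eq_top_of_not_le_supported (hq0 : q ≠ 0) (hq : ∀ m : ℕ, 0 < m → q ^ m ≠ 1)
    {w : k} (hw : w ≠ 0) {e : k} (he : e * e = 1) {n : ℕ}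
    {ρ : Dq k q →ₐ[k] Module.End k (ℕ →₀ k)} (hρ : VermaCond k q w (e * q ^ (n : ℤ)) ρ)
    {W : Submodule k (ℕ →₀ k)} (hW : ∀ (x : Dq k q), ∀ v ∈ W, ρ x v ∈ W)
    (hle : ¬W ≤ supported k k (Set.Ici (n + 1))) : W = ⊤ := by
  have hgen (g : DGen) : ∀ v ∈ W, vermaAction q w (e * q ^ (n : ℤ)) g v ∈ W := by
    simpa [hρ.map_gen] using hW (Dq.gen k q g)
  obtain ⟨v, hvW, hv⟩ := SetLike.not_le_iff_exists.mp hle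
  obtain ⟨j, hjn, hjv⟩ : ∃ j ≤ n, v j ≠ 0 := by
    simpa [mem_supported'] using hv
  have hweight : w * (e * q ^ (n : ℤ)) ≠ 0 :=
    mul_ne_zero hw (mul_ne_zero (left_ne_zero_of_mul_eq_one he) (zpow_ne_zero _ hq0))
  have hj : single j (v j) ∈ W :=
    single_mem_of_diagEnd_mem (vK_weight_injective hq0 hq hweight) (hgen .K) hvW j
  exact invariant_eq_top_of_single_mem hq0 hq hw he (hgen .E) (hgen .F) hjn
    ((W.smul_mem_iff hjv).mp (by simpa [smul_single] using hj))

theorem lmapDomain_add_comp_vermaAction (hq0 : q ≠ 0) (w : k) {e : k} (he : e * e = 1) (n : ℕ)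
    (g : DGen) :
    lmapDomain k k (· + (n + 1)) ∘ₗ
        vermaAction q w (q ^ (-(2 * ((n : ℤ) + 1))) * (e * q ^ (n : ℤ))) g =
      vermaAction q w (e * q ^ (n : ℤ)) g ∘ₗ lmapDomain k k (· + (n + 1)) := by
  have hweight (a : k) (i : ℕ) : a * (q ^ (-(2 * ((n : ℤ) + 1))) * (e * q ^ (n : ℤ))) *
      q ^ (-(2 * (i : ℤ))) = a * (e * q ^ (n : ℤ)) * q ^ (-(2 * ((i + (n + 1) : ℕ) : ℤ))) := by
    rw [show -(2 * ((i + (n + 1) : ℕ) : ℤ)) = -(2 * ((n : ℤ) + 1)) + -(2 * (i : ℤ)) by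
      push_cast; ring, zpow_add₀ hq0]
    ring
  cases g
  case E =>
    refine lhom_ext fun i c => ?_
    simp only [vermaAction, LinearMap.comp_apply, lmapDomain_apply, mapDomain_single]
    cases i with
    | zero =>
      rw [vE_single_zero, mapDomain_zero, zero_add, vE_single_succ,
        vEcoeff_highest_succ hq0 w he, zero_smul]
    | succ i =>
      rw [vE_single_succ, mapDomain_smul, mapDomain_single, vEcoeff_shift hq0 w he,
        show i + 1 + (n + 1) = i + (n + 1) + 1 by ring, vE_single_succ]
  case F =>
    refine lhom_ext fun i c => ?_
    simp only [vermaAction, LinearMap.comp_apply, lmapDomain_apply, mapDomain_single, vF_single]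
    ring_nf
  all_goals
    refine lmapDomain_comp_diagEnd _ fun i => ?_
    first | exact hweight _ i | exact congrArg Inv.inv (hweight _ i)

end VermaModule

theorem verma_maximal_submodule_general (k : Type) [Field k] (q w lam : k)
    (hq0 : q ≠ 0) (hq : ∀ m : ℕ, 0 < m → q ^ m ≠ 1) (hw : w ≠ 0)
    (n : ℕ) (hlam : lam = q ^ n ∨ lam = -(q ^ n))
    (ρ : Dq k q →ₐ[k] Module.End k (ℕ →₀ k)) (hρ : VermaCond k q w lam ρ) :
    letI W : Submodule k (ℕ →₀ k) :=
      Submodule.span k {f : ℕ →₀ k | ∃ i : ℕ, n + 1 ≤ i ∧ f = Finsupp.single i 1}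
    (∀ (x : Dq k q), ∀ v ∈ W, ρ x v ∈ W) ∧
    (∀ W' : Submodule k (ℕ →₀ k),
        (∀ (x : Dq k q), ∀ v ∈ W', ρ x v ∈ W') → W' ≠ ⊤ → W' ≤ W) ∧
    (∀ ρ' : Dq k q →ₐ[k] Module.End k (ℕ →₀ k),
        VermaCond k q w (q ^ (-(2 * ((n : ℤ) + 1))) * lam) ρ' →
        ∃ ι : (ℕ →₀ k) →ₗ[k] (ℕ →₀ k),
          Function.Injective ι ∧ LinearMap.range ι = W ∧
          ∀ (x : Dq k q) (v : ℕ →₀ k), ι (ρ' x v) = ρ x (ι v)) ∧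
    Module.finrank k ((ℕ →₀ k) ⧸ W) = n + 1 ∧
    (∀ U : Submodule k (ℕ →₀ k),
        (∀ (x : Dq k q), ∀ v ∈ U, ρ x v ∈ U) → W ≤ U → U = W ∨ U = ⊤) := by
  obtain ⟨e, he, rfl⟩ := exists_sign_mul_zpow hlam
  rw [span_single_eq_supported]
  have hmax {U : Submodule k (ℕ →₀ k)} (hU : ∀ (x : Dq k q), ∀ v ∈ U, ρ x v ∈ U)
      (hle : ¬U ≤ supported k k (Set.Ici (n + 1))) : U = ⊤ :=
    hρ.eq_top_of_not_le_supported hq0 hq hw he hU hle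
  refine ⟨Dq.mapsTo_of_gen ρ fun g v hv => ?_, fun U hU hne => ?_, fun ρ' hρ' => ?_, ?_,
    fun U hU hWU => ?_⟩
  · rw [hρ.map_gen]
    exact vermaAction_mapsTo_supported hq0 w he n g hv
  · by_contra hle
    exact hne (hmax hU hle)
  · refine ⟨lmapDomain k k (· + (n + 1)), mapDomain_injective (add_left_injective _), ?_,
      fun x v => LinearMap.congr_fun
        (Dq.intertwines_of_gen ρ ρ' (lmapDomain k k (· + (n + 1))) (fun g => ?_) x) v⟩
    · exact range_lmapDomain_add (n + 1)
    · rw [hρ.map_gen, hρ'.map_gen]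
      exact lmapDomain_add_comp_vermaAction hq0 w he n g
  · rw [finrank_quotient_supported (by simp), Set.compl_Ici]
    simp
  · by_cases hle : U ≤ supported k k (Set.Ici (n + 1))
    · exact Or.inl (le_antisymm hle hWU)
    · exact Or.inr (hmax hU hle)

/-- if `q` is not a root of unity and `λ = ±qⁿ`, then
`W = span{m_i : i ≥ n+1}` is a `D_q`-submodule of `M_w(λ)`, every proper submodule
is contained in `W`, `W ≅ M_w(q^{−2(n+1)}λ)`, and `M_w(λ)/W` is simple of
dimension `n+1`. -/
theorem verma_maximal_submodule (k : Type) [Field k] (q w lam : k)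
    (hq0 : q ≠ 0) (hq : ∀ m : ℕ, 0 < m → q ^ m ≠ 1) (hw : w ≠ 0) (hlam0 : lam ≠ 0)
    (n : ℕ) (hlam : lam = q ^ n ∨ lam = -(q ^ n))
    (ρ : Dq k q →ₐ[k] Module.End k (ℕ →₀ k)) (hρ : VermaCond k q w lam ρ) :
    letI W : Submodule k (ℕ →₀ k) :=
      Submodule.span k {f : ℕ →₀ k | ∃ i : ℕ, n + 1 ≤ i ∧ f = Finsupp.single i 1}
    (∀ (x : Dq k q), ∀ v ∈ W, ρ x v ∈ W) ∧
    (∀ W' : Submodule k (ℕ →₀ k),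
        (∀ (x : Dq k q), ∀ v ∈ W', ρ x v ∈ W') → W' ≠ ⊤ → W' ≤ W) ∧
    (∀ ρ' : Dq k q →ₐ[k] Module.End k (ℕ →₀ k),
        VermaCond k q w (q ^ (-(2 * ((n : ℤ) + 1))) * lam) ρ' →
        ∃ ι : (ℕ →₀ k) →ₗ[k] (ℕ →₀ k),
          Function.Injective ι ∧ LinearMap.range ι = W ∧
          ∀ (x : Dq k q) (v : ℕ →₀ k), ι (ρ' x v) = ρ x (ι v)) ∧
    Module.finrank k ((ℕ →₀ k) ⧸ W) = n + 1 ∧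
    (∀ U : Submodule k (ℕ →₀ k),
        (∀ (x : Dq k q), ∀ v ∈ U, ρ x v ∈ U) → W ≤ U → U = W ∨ U = ⊤) :=
  verma_maximal_submodule_general k q w lam hq0 hq hw n hlam ρ hρ
end
end
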